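/- arXiv:1112.0161 — 4 statements merged into one kernel-verified Lean document; each statement's English description precedes it below -/
import Mathlib

section
/- Let V be a vector space over a field and let Φ = (φ_1, ..., φ_M) be a finite family of vectors in V. Then the following are equivalent: (i) the index set {1,...,M} can be partitioned into k sets A_1,...,A_k such that for each i the subfamily (φ_j)_{j ∈ A_i} is linearly independent; (ii) for every subset J ⊆ {1,...,M}, the cardinality |J| is at most k times the dimension of the span of (φ_j)_{j ∈ J} (equivalently |J|/dim span(φ_j : j ∈ J) ≤ k). -/
/-!
The hard direction is proved for list colourings, in which the index `e` may only receive a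
colour from a prescribed list `C e`, and the Rado–Horn condition reads
`|I| ≤ ∑ i, rank {e ∈ I | i ∈ C e}`. This is the Rado–Welsh shrinking argument. If some list
contains two colours `a ≠ b`, deleting one of them from it preserves the condition: were it
violated by `I₁` after deleting `a` and by `I₂` after deleting `b`, submodularity of the rank,
applied colour by colour, would give `|I₁ ∪ I₂| + |I₁ ∩ I₂| - 1 ≤ |I₁| + |I₂| - 2`. Once every
list is a single colour, the condition for the whole index set forces every colour class to
have rank equal to its size, that is, to be linearly independent.
-/

open Module Submodule Set

section

variable {K V : Type*} [Field K] [AddCommGroup V] [Module K V]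

theorem Set.finrank_le_finrank_of_subset {s t : Set V} (hst : s ⊆ t) (ht : t.Finite) :
    s.finrank K ≤ t.finrank K :=
  have := FiniteDimensional.span_of_finite K ht
  Submodule.finrank_mono (span_mono hst)

theorem Set.finrank_union_add_finrank_inter_le {s t : Set V} (hs : s.Finite) (ht : t.Finite) :
    (s ∪ t).finrank K + (s ∩ t).finrank K ≤ s.finrank K + t.finrank K := by
  have := FiniteDimensional.span_of_finite K hs
  have := FiniteDimensional.span_of_finite K ht
  have hinter : span K (s ∩ t) ≤ span K s ⊓ span K t :=
    le_inf (span_mono inter_subset_left) (span_mono inter_subset_right)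
  calc (s ∪ t).finrank K + (s ∩ t).finrank K
      ≤ finrank K ↥(span K s ⊔ span K t) + finrank K ↥(span K s ⊓ span K t) := by
        rw [Set.finrank, span_union]
        exact Nat.add_le_add_left (Submodule.finrank_mono hinter) _
    _ = s.finrank K + t.finrank K := finrank_sup_add_finrank_inf_eq _ _

variable {E : Type*} (φ : E → V)

theorem finrank_image_add_finrank_image_le [Finite E] {s t s' t' : Set E}
    (hs : s ⊆ s' ∪ t') (ht : t ⊆ s' ∩ t') :
    (φ '' s).finrank K + (φ '' t).finrank K ≤ (φ '' s').finrank K + (φ '' t').finrank K :=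
  calc (φ '' s).finrank K + (φ '' t).finrank K
      ≤ (φ '' s' ∪ φ '' t').finrank K + (φ '' s' ∩ φ '' t').finrank K := by
        gcongr
        · exact Set.finrank_le_finrank_of_subset ((image_mono hs).trans (image_union ..).le)
            (toFinite _)
        · exact Set.finrank_le_finrank_of_subset ((image_mono ht).trans (image_inter_subset ..))
            (toFinite _)
    _ ≤ (φ '' s').finrank K + (φ '' t').finrank K :=
        Set.finrank_union_add_finrank_inter_le (toFinite _) (toFinite _)

theorem finrank_image_le_card (s : Finset E) : (φ '' s).finrank K ≤ s.card := by
  classical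
  simpa [Finset.coe_image] using
    (finrank_span_finset_le_card (R := K) (s.image φ)).trans Finset.card_image_le

theorem linearIndepOn_iff_card_le_finrank_image (s : Finset E) :
    LinearIndepOn K φ s ↔ s.card ≤ (φ '' s).finrank K := by
  rw [LinearIndepOn, linearIndependent_iff_card_eq_finrank_span, ← image_eq_range]
  simp only [SetLike.coe_sort_coe, Fintype.card_coe]
  exact ⟨le_of_eq, fun h => h.antisymm (finrank_image_le_card φ s)⟩

theorem card_le_mul_finrank_of_linearIndepOn_fibers {κ : Type*} [Fintype κ] {f : E → κ}
    (hf : ∀ i, LinearIndepOn K φ {e | f e = i}) (J : Finset E) :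
    J.card ≤ Fintype.card κ * (φ '' J).finrank K := by
  classical
  have hfiber (i : κ) : (J.filter (f · = i)).card ≤ (φ '' J).finrank K := by
    have hind : LinearIndepOn K φ ↑(J.filter (f · = i)) :=
      (hf i).mono fun e he => (Finset.mem_filter.1 he).2
    exact ((linearIndepOn_iff_card_le_finrank_image φ _).1 hind).trans
      (Set.finrank_le_finrank_of_subset (image_mono (Finset.filter_subset _ J))
        (J.finite_toSet.image φ))
  calc J.card = ∑ i, (J.filter (f · = i)).card :=
        Finset.card_eq_sum_card_fiberwise fun e _ => Finset.mem_univ (f e)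
    _ ≤ ∑ _i : κ, (φ '' J).finrank K := Finset.sum_le_sum fun i _ => hfiber i
    _ = Fintype.card κ * (φ '' J).finrank K := by simp

variable {κ : Type*} [Fintype κ]

variable (K) in
def ListRankCondition (C : E → Finset κ) : Prop :=
  ∀ I : Finset E, I.card ≤ ∑ i, (φ '' {e | e ∈ I ∧ i ∈ C e}).finrank K

theorem listRankCondition_const_univ_iff :
    ListRankCondition K φ (fun _ => (Finset.univ : Finset κ)) ↔
      ∀ I : Finset E, I.card ≤ Fintype.card κ * (φ '' I).finrank K := by
  simp [ListRankCondition]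

variable {φ} in
theorem ListRankCondition.nonempty {C : E → Finset κ} (hC : ListRankCondition K φ C) (e : E) :
    (C e).Nonempty := by
  by_contra hempty
  have hset (i : κ) : {x | x ∈ ({e} : Finset E) ∧ i ∈ C x} = ∅ :=
    eq_empty_of_forall_notMem fun x ⟨hx, hi⟩ => hempty ⟨i, Finset.mem_singleton.1 hx ▸ hi⟩
  have hsingleton := hC {e}
  simp only [hset, image_empty, Set.finrank_empty, Finset.sum_const_zero,
    Finset.card_singleton] at hsingleton
  omega

theorem linearIndepOn_fibers_of_listRankCondition [Fintype E] {f : E → κ}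
    (hf : ListRankCondition K φ fun e => {f e}) (i : κ) : LinearIndepOn K φ {e | f e = i} := by
  classical
  have hfiber (j : κ) : ((Finset.univ.filter (f · = j) : Finset E) : Set E) = {e | f e = j} := by
    simp
  have hle (j : κ) : (φ '' {e | f e = j}).finrank K ≤ (Finset.univ.filter (f · = j)).card := by
    simpa [hfiber] using finrank_image_le_card φ (Finset.univ.filter (f · = j))
  have htotal :
      ∑ j, (Finset.univ.filter (f · = j)).card ≤ ∑ j, (φ '' {e | f e = j}).finrank K := by
    rw [← Finset.card_eq_sum_card_fiberwise fun e _ => Finset.mem_univ (f e)]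
    simpa [eq_comm] using hf Finset.univ
  have heq := (Finset.sum_eq_sum_iff_of_le fun j _ => hle j).1
    (le_antisymm (Finset.sum_le_sum fun j _ => hle j) htotal) i (Finset.mem_univ i)
  rw [← hfiber, linearIndepOn_iff_card_le_finrank_image, hfiber]
  exact heq.ge

theorem listRankCondition_update_erase [Finite E] [DecidableEq E] [DecidableEq κ]
    {C : E → Finset κ} (hC : ListRankCondition K φ C) {e : E} {a b : κ} (ha : a ∈ C e)
    (hb : b ∈ C e) (hab : a ≠ b) :
    ListRankCondition K φ (Function.update C e ((C e).erase a)) ∨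
      ListRankCondition K φ (Function.update C e ((C e).erase b)) := by
  unfold ListRankCondition
  by_contra! ⟨⟨I₁, h₁⟩, ⟨I₂, h₂⟩⟩
  have hmem {I : Finset E} {c : κ}
      (hI : ∑ i, (φ '' {x | x ∈ I ∧ i ∈ Function.update C e ((C e).erase c) x}).finrank K
        < I.card) : e ∈ I := by
    by_contra he
    have hset (i : κ) : {x | x ∈ I ∧ i ∈ Function.update C e ((C e).erase c) x} =
        {x | x ∈ I ∧ i ∈ C x} := by
      ext x
      exact and_congr_right fun hx => by rw [Function.update_of_ne (ne_of_mem_of_not_mem hx he)]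
    simp only [hset] at hI
    exact (hC I).not_gt hI
  have he₁ := hmem h₁
  have he₂ := hmem h₂
  have hcolor (i : κ) :
      (φ '' {x | x ∈ I₁ ∪ I₂ ∧ i ∈ C x}).finrank K
        + (φ '' {x | x ∈ (I₁ ∩ I₂).erase e ∧ i ∈ C x}).finrank K
      ≤ (φ '' {x | x ∈ I₁ ∧ i ∈ Function.update C e ((C e).erase a) x}).finrank K
        + (φ '' {x | x ∈ I₂ ∧ i ∈ Function.update C e ((C e).erase b) x}).finrank K := by
    refine finrank_image_add_finrank_image_le φ ?_ ?_
    · rintro x ⟨hx, hi⟩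
      by_cases hxe : x = e
      · subst hxe
        by_cases hia : i = a
        · subst hia
          simp [hab, hi, he₂]
        · simp [hia, hi, he₁]
      · simp_all
    · rintro x ⟨hx, hi⟩
      have hxe : x ≠ e := (Finset.mem_erase.1 hx).1
      simp_all
  have hunion := hC (I₁ ∪ I₂)
  have hinter := hC ((I₁ ∩ I₂).erase e)
  have hsum := Finset.sum_le_sum fun i (_ : i ∈ Finset.univ) => hcolor i
  rw [Finset.sum_add_distrib, Finset.sum_add_distrib] at hsum
  have hcard := Finset.card_union_add_card_inter I₁ I₂
  rw [Finset.card_erase_of_mem (Finset.mem_inter.2 ⟨he₁, he₂⟩)] at hinter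
  have hpos : 0 < (I₁ ∩ I₂).card := Finset.card_pos.2 ⟨e, Finset.mem_inter.2 ⟨he₁, he₂⟩⟩
  omega

theorem exists_linearIndepOn_fibers_of_listRankCondition [Fintype E] [DecidableEq E]
    [DecidableEq κ] {C : E → Finset κ} (hC : ListRankCondition K φ C) :
    ∃ f : E → κ, (∀ e, f e ∈ C e) ∧ ∀ i, LinearIndepOn K φ {e | f e = i} := by
  induction hn : ∑ e, (C e).card using Nat.strong_induction_on generalizing C with
  | _ n ih =>
  by_cases hlong : ∃ e, 1 < (C e).card
  · obtain ⟨e, he⟩ := hlong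
    obtain ⟨a, ha, b, hb, hab⟩ := Finset.one_lt_card.1 he
    have hshrink {c : κ} (hc : c ∈ C e)
        (hCc : ListRankCondition K φ (Function.update C e ((C e).erase c))) :
        ∃ f : E → κ, (∀ e, f e ∈ C e) ∧ ∀ i, LinearIndepOn K φ {e | f e = i} := by
      have hlt : ∑ x, (Function.update C e ((C e).erase c) x).card < n := by
        rw [← hn]
        refine Finset.sum_lt_sum (fun x _ => ?_) ⟨e, Finset.mem_univ e, ?_⟩
        · rcases eq_or_ne x e with rfl | hxe
          · simpa using Finset.card_erase_le
          · rw [Function.update_of_ne hxe]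
        · simpa using Finset.card_erase_lt_of_mem hc
      obtain ⟨f, hfC, hf⟩ := ih _ hlt hCc rfl
      refine ⟨f, fun x => ?_, hf⟩
      rcases eq_or_ne x e with rfl | hxe
      · simpa using Finset.mem_of_mem_erase (by simpa using hfC x)
      · simpa [Function.update_of_ne hxe] using hfC x
    rcases listRankCondition_update_erase φ hC ha hb hab with hCa | hCb
    · exact hshrink ha hCa
    · exact hshrink hb hCb
  · push Not at hlong
    choose f hf using fun e => Finset.card_eq_one.1 ((hlong e).antisymm (hC.nonempty e).card_pos)
    obtain rfl : C = fun e => {f e} := funext hf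
    exact ⟨f, fun e => Finset.mem_singleton_self _, linearIndepOn_fibers_of_listRankCondition φ hC⟩

end

/-- **Rado–Horn theorem.**  A finite family of vectors `φ : Fin M → V` can be
partitioned into `k` linearly independent subfamilies if and only if every
subset `J` of the index set satisfies `|J| ≤ k · dim span (φ j : j ∈ J)`. -/
theorem rado_horn {K V : Type*} [Field K] [AddCommGroup V] [Module K V]
    {M : ℕ} (k : ℕ) (φ : Fin M → V) :
    (∃ f : Fin M → Fin k, ∀ i : Fin k,
        LinearIndependent K (fun x : {j : Fin M // f j = i} => φ x.1)) ↔
      (∀ J : Finset (Fin M),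
        J.card ≤ k * Module.finrank K (Submodule.span K (φ '' ↑J))) := by
  constructor
  · rintro ⟨f, hf⟩ J
    simpa [Set.finrank] using card_le_mul_finrank_of_linearIndepOn_fibers φ hf J
  · intro H
    have hC : ListRankCondition K φ fun _ => (Finset.univ : Finset (Fin k)) :=
      (listRankCondition_const_univ_iff φ).2 (by simpa [Set.finrank] using H)
    obtain ⟨f, -, hf⟩ := exists_linearIndepOn_fibers_of_listRankCondition φ hC
    exact ⟨f, hf⟩
end

section
/- Let Φ = (φ_1,...,φ_M) be a finite family of vectors in a vector space V. An ordered partition F = {F_1,...,F_ℓ} of Φ into linearly independent sets is a fundamental partition if and only if for every other ordered partition {P_1,...,P_k} of Φ into linearly independent sets one has (i) ℓ ≤ k, and (ii) for every j = 1,...,ℓ, the partial sum |P_1| + ... + |P_j| ≤ |F_1| + ... + |F_j| (that is, the size sequence of F majorizes the size sequence of every ordered partition of Φ into linearly independent sets). -/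
/-- The sequence of part sizes of a partition `F : Fin ℓ → Finset (Fin M)`,
padded with zeros. -/
def PartSizes {M ℓ : ℕ} (F : Fin ℓ → Finset (Fin M)) : ℕ → ℕ :=
  fun n => if h : n < ℓ then (F ⟨n, h⟩).card else 0

/-- Lexicographic order on sequences of naturals: `a ≤ₗₑₓ b`. -/
def LexLE (a b : ℕ → ℕ) : Prop :=
  a = b ∨ ∃ n, (∀ m < n, a m = b m) ∧ a n < b n

/-- `F : Fin ℓ → Finset (Fin M)` is an ordered partition of the index set `Ω`
into sets indexing linearly independent subfamilies of `φ`: the parts are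
nonempty, pairwise disjoint, cover `Ω`, each part indexes a linearly
independent subfamily, and the part sizes are non-increasing. -/
def IsOrderedLIPartitionOn (K : Type*) {V : Type*} [Field K] [AddCommGroup V] [Module K V]
    {M ℓ : ℕ} (φ : Fin M → V) (Ω : Finset (Fin M)) (F : Fin ℓ → Finset (Fin M)) : Prop :=
  (∀ i, (F i).Nonempty) ∧
  (∀ i j, i ≠ j → Disjoint (F i) (F j)) ∧
  (Finset.univ.biUnion F = Ω) ∧
  (∀ i, LinearIndependent K (fun x : {y : Fin M // y ∈ F i} => φ x.1)) ∧
  (∀ i j : Fin ℓ, i ≤ j → (F j).card ≤ (F i).card)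

/-- A fundamental partition of the subfamily of `φ` indexed by `Ω`: an ordered
partition into linearly independent sets whose size sequence is
lexicographically maximal among all such ordered partitions. -/
def IsFundamentalOn (K : Type*) {V : Type*} [Field K] [AddCommGroup V] [Module K V]
    {M ℓ : ℕ} (φ : Fin M → V) (Ω : Finset (Fin M)) (F : Fin ℓ → Finset (Fin M)) : Prop :=
  IsOrderedLIPartitionOn K φ Ω F ∧
  ∀ (k : ℕ) (P : Fin k → Finset (Fin M)),
    IsOrderedLIPartitionOn K φ Ω P → LexLE (PartSizes P) (PartSizes F)

/-! If some ordered partition `P` covered more elements with its first `j` parts than a fundamental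
partition `F` does, Edmonds' augmenting-path argument (in the exchange graph of the first `j` parts
of `F`, exchanging along a shortest augmenting path) would let one of those parts grow by an element
`x` while the others keep their sizes. Taking `x` out of its own, later and hence no larger, part
of `F` gives a partition with a larger potential `∑ (ℓ + 2) ^ |part|`; on non-increasing size
sequences this potential is monotone for the lexicographic order, contradicting the maximality of
`F`. Conversely, majorization together with equal totals makes the first difference between the
size sequences favour `F`. -/

open Finset Submodule Function

section Exchange

variable {K V ι : Type*} [Field K] [AddCommGroup V] [Module K V]

theorem span_insert_eq_span_insert_of_exchange {s : Set V} {x y : V}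
    (hx : x ∈ span K (insert y s)) (hxs : x ∉ span K s) :
    span K (insert x s) = span K (insert y s) := by
  have hle : ∀ {a b : V}, a ∈ span K (insert b s) → span K (insert a s) ≤ span K (insert b s) :=
    fun ha => span_le.2 <|
      Set.insert_subset ha (subset_span.trans (span_mono (Set.subset_insert _ _)))
  exact le_antisymm (hle hx) (hle (mem_span_insert_exchange hx hxs))

variable {φ : ι → V}

theorem LinearIndepOn.card_le_of_subset_span {S T : Finset ι} (hS : LinearIndepOn K φ (S : Set ι))
    (hST : ∀ x ∈ S, φ x ∈ span K (φ '' T)) : #S ≤ #T := by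
  classical
  have hle : span K (S.image φ : Set V) ≤ span K (T.image φ : Set V) := by
    rw [span_le, coe_image]
    rintro _ ⟨x, hx, rfl⟩
    simpa [coe_image] using hST x hx
  calc #S = #(S.image φ) := (card_image_of_injOn hS.injOn).symm
    _ = Module.finrank K (span K (S.image φ : Set V)) :=
        (finrank_span_finset_eq_card (by rw [coe_image]; exact hS.id_image)).symm
    _ ≤ Module.finrank K (span K (T.image φ : Set V)) := Submodule.finrank_mono hle
    _ ≤ #(T.image φ) := finrank_span_finset_le_card _
    _ ≤ #T := card_image_le

variable [DecidableEq ι]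

theorem span_image_insert_erase {S : Finset ι} {x y : ι} (hy : y ∈ S)
    (hx : φ x ∈ span K (φ '' S)) (hxy : φ x ∉ span K (φ '' ↑(S.erase y))) :
    span K (φ '' ↑(insert x (S.erase y))) = span K (φ '' S) := by
  have hS : φ '' S = insert (φ y) (φ '' ↑(S.erase y)) := by
    rw [← Set.image_insert_eq, ← coe_insert, insert_erase hy]
  rw [hS] at hx
  rw [coe_insert, Set.image_insert_eq, hS, span_insert_eq_span_insert_of_exchange hx hxy]

theorem LinearIndepOn.insert_erase {S : Finset ι} {x y : ι} (hS : LinearIndepOn K φ (S : Set ι))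
    (hxy : φ x ∉ span K (φ '' ↑(S.erase y))) :
    LinearIndepOn K φ (insert x (S.erase y) : Finset ι) := by
  rw [coe_insert]
  exact (hS.mono (coe_subset.2 (erase_subset y S))).insert hxy

theorem LinearIndepOn.notMem_span_image_erase {S : Finset ι} {y : ι}
    (hS : LinearIndepOn K φ (S : Set ι)) (hy : y ∈ S) :
    φ y ∉ span K (φ '' ↑(S.erase y)) := by
  have h := hS
  rw [← Finset.insert_erase hy, coe_insert, linearIndepOn_insert (by simp)] at h
  exact h.2

theorem LinearIndepOn.mem_span_image_filter {S : Finset ι} {v : ι} (p : ι → Prop)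
    [DecidablePred p] (hS : LinearIndepOn K φ (S : Set ι)) (hv : φ v ∈ span K (φ '' S))
    (h : ∀ y ∈ S, ¬ p y → φ v ∈ span K (φ '' ↑(S.erase y))) :
    φ v ∈ span K (φ '' ↑(S.filter p)) := by
  suffices key : ∀ D ⊆ S.filter (¬ p ·), φ v ∈ span K (φ '' ↑(S \ D)) by
    have hfilter : S \ S.filter (¬ p ·) = S.filter p := by
      ext z; by_cases p z <;> simp [*]
    simpa only [hfilter] using key _ subset_rfl
  intro D
  induction D using Finset.induction_on with
  | empty => simpa using hv
  | @insert y D hyD ih =>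
    intro hD
    obtain ⟨hyS, hpy⟩ := mem_filter.1 (hD (mem_insert_self y D))
    have hv' := ih ((subset_insert y D).trans hD)
    by_contra hvn
    have hSD : S \ D = insert y (S \ insert y D) := by
      rw [sdiff_insert, Finset.insert_erase (mem_sdiff.2 ⟨hyS, hyD⟩)]
    rw [hSD, coe_insert, Set.image_insert_eq] at hv'
    have hy := mem_span_insert_exchange hv' hvn
    refine hS.notMem_span_image_erase hyS (span_le.2 (Set.insert_subset (h y hyS hpy) ?_) hy)
    refine subset_span.trans (span_mono (Set.image_mono ?_))
    intro z hz
    simp only [coe_sdiff, coe_insert, Set.mem_sdiff, Set.mem_insert_iff, not_or] at hz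
    simpa [hz.2.1] using hz.1

end Exchange

section Augmentation
variable {K V ι κ : Type*} [Field K] [AddCommGroup V] [Module K V] {φ : ι → V}

variable (K φ) in
def IsIndepPacking (A : κ → Finset ι) : Prop :=
  Pairwise (Disjoint on A) ∧ ∀ i, LinearIndepOn K φ (A i : Set ι)

variable [DecidableEq κ] in
theorem IsIndepPacking.update_of_disjoint {A : κ → Finset ι} (hA : IsIndepPacking K φ A) {i : κ}
    {S : Finset ι} (hS : LinearIndepOn K φ (S : Set ι)) (hdisj : ∀ j, j ≠ i → Disjoint S (A j)) :
    IsIndepPacking K φ (update A i S) := by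
  refine ⟨fun j j' hjj' => ?_, fun j => ?_⟩
  · simp only [onFun]
    by_cases hj : j = i
    · subst hj
      rw [update_self, update_of_ne (Ne.symm hjj')]
      exact hdisj j' (Ne.symm hjj')
    · by_cases hj' : j' = i
      · subst hj'
        rw [update_self, update_of_ne hj]
        exact (hdisj j hj).symm
      · rw [update_of_ne hj, update_of_ne hj']
        exact hA.1 hjj'
  · by_cases hj : j = i
    · subst hj; simpa using hS
    · simpa [update_of_ne hj] using hA.2 j

variable [DecidableEq ι]

variable (K φ) in
/-- `u` can take the place of `v` in a part: `insert u ((A i).erase v)` is then independent with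
the same span as `A i`. -/
def ExchangeArc (A : κ → Finset ι) (u v : ι) : Prop :=
  ∃ i, v ∈ A i ∧ u ∉ A i ∧ φ u ∈ span K (φ '' ↑(A i)) ∧ φ u ∉ span K (φ '' ↑((A i).erase v))

variable (K φ) in
def IsAugmentingPath (A : κ → Finset ι) (p : ℕ) (u : ℕ → ι) : Prop :=
  (∀ i, u 0 ∉ A i) ∧ (∀ t < p, ExchangeArc K φ A (u t) (u (t + 1))) ∧
    ∃ q, φ (u p) ∉ span K (φ '' ↑(A q))

theorem IsAugmentingPath.shortcut {A : κ → Finset ι} {p s t : ℕ} {u : ℕ → ι}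
    (hu : IsAugmentingPath K φ A p u) (hst : s + 2 ≤ t) (htp : t ≤ p)
    (harc : ExchangeArc K φ A (u s) (u t)) :
    IsAugmentingPath K φ A (p - (t - s - 1))
      (fun m => if m ≤ s then u m else u (m + (t - s - 1))) := by
  obtain ⟨hfree, harcs, q, hq⟩ := hu
  refine ⟨by simpa using hfree, fun m hm => ?_, q, ?_⟩
  · rcases lt_trichotomy m s with h | rfl | h
    · simpa [h.le, Nat.succ_le_of_lt h] using harcs m (by omega)
    · simpa [show m + 1 + (t - m - 1) = t by omega] using harc
    · simpa [show ¬ m ≤ s by omega, show ¬ m < s by omega,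
        show m + 1 + (t - s - 1) = m + (t - s - 1) + 1 by omega]
        using harcs (m + (t - s - 1)) (by omega)
  · simpa [show ¬ p - (t - s - 1) ≤ s by omega, show p - (t - s - 1) + (t - s - 1) = p by omega]
      using hq

/-- Closure under arcs makes each part of `A` span `R` by its own elements of `R`, which bounds the
elements of `R` in each part of `B`; outside `R` the parts of `A` cover everything. -/
theorem IsIndepPacking.sum_card_le_of_closed [Fintype κ] {A B : κ → Finset ι}
    (hA : IsIndepPacking K φ A) (hB : IsIndepPacking K φ B) (R : Finset ι)
    (hfree : ∀ v, (∀ j, v ∉ A j) → v ∈ R) (harc : ∀ v ∈ R, ∀ w, ExchangeArc K φ A v w → w ∈ R)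
    (hsink : ∀ v ∈ R, ∀ j, φ v ∈ span K (φ '' ↑(A j))) : ∑ j, #(B j) ≤ ∑ j, #(A j) := by
  have hspan : ∀ v ∈ R, ∀ j, φ v ∈ span K (φ '' ↑((A j).filter (· ∈ R))) := by
    intro v hv j
    by_cases hvj : v ∈ A j
    · exact subset_span ⟨v, by simpa [hv] using hvj, rfl⟩
    · exact (hA.2 j).mem_span_image_filter _ (hsink v hv j) fun y hy hyR =>
        by_contra fun h => hyR (harc v hv y ⟨j, hy, hvj, hsink v hv j, h⟩)
  have hin : ∀ j, #((B j).filter (· ∈ R)) ≤ #((A j).filter (· ∈ R)) := fun j =>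
    ((hB.2 j).mono (coe_subset.2 (filter_subset _ _))).card_le_of_subset_span
      fun x hx => hspan x (mem_filter.1 hx).2 j
  have hout : ∑ j, #((B j).filter (· ∉ R)) ≤ ∑ j, #((A j).filter (· ∉ R)) := by
    rw [← card_biUnion fun j _ j' _ h => disjoint_filter_filter (hB.1 h),
      ← card_biUnion fun j _ j' _ h => disjoint_filter_filter (hA.1 h)]
    refine card_le_card (biUnion_subset.2 fun j _ x hx => ?_)
    obtain ⟨-, hxR⟩ := mem_filter.1 hx
    obtain ⟨i, hi⟩ : ∃ i, x ∈ A i := by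
      by_contra h
      push Not at h
      exact hxR (hfree x h)
    exact mem_biUnion.2 ⟨i, mem_univ i, mem_filter.2 ⟨hi, hxR⟩⟩
  have hsplit : ∀ C : κ → Finset ι, ∑ j, #(C j) =
      ∑ j, #((C j).filter (· ∈ R)) + ∑ j, #((C j).filter (· ∉ R)) := fun C => by
    rw [← sum_add_distrib]
    exact sum_congr rfl fun j _ => (card_filter_add_card_filter_not _).symm
  have := sum_le_sum fun j (_ : j ∈ univ) => hin j
  rw [hsplit A, hsplit B]
  omega

/-- Otherwise the elements reachable from outside the parts would satisfy
`IsIndepPacking.sum_card_le_of_closed`. -/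
theorem exists_isAugmentingPath [Fintype ι] [Fintype κ] {A B : κ → Finset ι}
    (hA : IsIndepPacking K φ A) (hB : IsIndepPacking K φ B)
    (hlt : ∑ j, #(A j) < ∑ j, #(B j)) : ∃ p u, IsAugmentingPath K φ A p u := by
  classical
  by_contra hno
  push Not at hno
  refine hlt.not_ge (hA.sum_card_le_of_closed hB (univ.filter fun v => ∃ p, ∃ u : ℕ → ι,
    (∀ j, u 0 ∉ A j) ∧ (∀ t < p, ExchangeArc K φ A (u t) (u (t + 1))) ∧ u p = v)
    (fun v hv => mem_filter.2 ⟨mem_univ v, 0, fun _ => v, hv, by simp, rfl⟩) ?_ ?_)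
  · intro v hv w hvw
    obtain ⟨p, u, h0, harcs, rfl⟩ := (mem_filter.1 hv).2
    refine mem_filter.2 ⟨mem_univ w, p + 1, update u (p + 1) w, by simpa using h0,
      fun t ht => ?_, by simp⟩
    rcases Nat.lt_succ_iff_lt_or_eq.1 ht with ht | rfl
    · simpa [update_of_ne (show t ≠ p + 1 by omega), update_of_ne (show t + 1 ≠ p + 1 by omega)]
        using harcs t ht
    · simpa using hvw
  · intro v hv i
    obtain ⟨p, u, h0, harcs, rfl⟩ := (mem_filter.1 hv).2
    exact by_contra fun h => hno p u ⟨h0, harcs, i, h⟩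

variable [DecidableEq κ] {A : κ → Finset ι} {i : κ} {x y : ι}

theorem IsIndepPacking.update_insert (hA : IsIndepPacking K φ A) (hx : ∀ j, x ∉ A j)
    (hxi : φ x ∉ span K (φ '' ↑(A i))) : IsIndepPacking K φ (update A i (insert x (A i))) := by
  refine hA.update_of_disjoint ?_ fun j hj => disjoint_insert_left.2 ⟨hx j, hA.1 (Ne.symm hj)⟩
  rw [coe_insert]
  exact (hA.2 i).insert hxi

theorem IsIndepPacking.update_insert_erase (hA : IsIndepPacking K φ A) (hx : ∀ j, x ∉ A j)
    (hxy : φ x ∉ span K (φ '' ↑((A i).erase y))) :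
    IsIndepPacking K φ (update A i (insert x ((A i).erase y))) :=
  hA.update_of_disjoint ((hA.2 i).insert_erase hxy) fun j hj =>
    disjoint_insert_left.2 ⟨hx j, (hA.1 (Ne.symm hj)).mono_left (erase_subset y (A i))⟩

theorem card_update_insert_erase (hx : ∀ j, x ∉ A j) (hy : y ∈ A i) (j : κ) :
    #(update A i (insert x ((A i).erase y)) j) = #(A j) := by
  rcases eq_or_ne j i with rfl | hj
  · rw [update_self, card_insert_of_notMem fun h => hx j (mem_of_mem_erase h),
      card_erase_add_one hy]
  · rw [update_of_ne hj]

theorem span_update_insert_erase (hy : y ∈ A i) (hx : φ x ∈ span K (φ '' ↑(A i)))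
    (hxy : φ x ∉ span K (φ '' ↑((A i).erase y))) (j : κ) :
    span K (φ '' ↑(update A i (insert x ((A i).erase y)) j)) = span K (φ '' ↑(A j)) := by
  rcases eq_or_ne j i with rfl | hj
  · rw [update_self, span_image_insert_erase hy hx hxy]
  · rw [update_of_ne hj]

/-- Without an arc `x → w`, `φ x` lies in the span of `(A i).erase w`, so that span is unchanged
by the exchange. -/
theorem ExchangeArc.update_insert_erase {v w : ι} (hvw : ExchangeArc K φ A v w)
    (hx : ∀ j, x ∉ A j) (hy : y ∈ A i) (hxs : φ x ∈ span K (φ '' ↑(A i)))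
    (hxy : φ x ∉ span K (φ '' ↑((A i).erase y))) (hxw : ¬ ExchangeArc K φ A x w)
    (hwy : w ≠ y) (hvx : v ≠ x) :
    ExchangeArc K φ (update A i (insert x ((A i).erase y))) v w := by
  obtain ⟨i', hw, hv, hvs, hvns⟩ := hvw
  refine ⟨i', ?_, ?_, by rwa [span_update_insert_erase hy hxs hxy], ?_⟩
  · rcases eq_or_ne i' i with rfl | hi'
    · rw [update_self]
      exact mem_insert_of_mem (mem_erase.2 ⟨hwy, hw⟩)
    · rwa [update_of_ne hi']
  · rcases eq_or_ne i' i with rfl | hi'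
    · simp [update_self, hvx, hv]
    · rwa [update_of_ne hi']
  · rcases eq_or_ne i' i with rfl | hi'
    · have hxw' : φ x ∈ span K (φ '' ↑((A i').erase w)) := by
        by_contra h
        exact hxw ⟨i', hw, hx i', hxs, h⟩
      have hxy' : φ x ∉ span K (φ '' ↑(((A i').erase w).erase y)) := by
        refine fun h => hxy (span_mono (Set.image_mono ?_) h)
        rw [erase_right_comm]
        exact coe_subset.2 (erase_subset _ _)
      rw [update_self, erase_insert_of_ne fun h : x = w => hx i' (h ▸ hw), erase_right_comm,
        span_image_insert_erase (mem_erase.2 ⟨Ne.symm hwy, hy⟩) hxw' hxy']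
      exact hvns
    · rwa [update_of_ne hi']

theorem update_subset_insert_biUnion [Fintype κ] {S : Finset ι} (hS : S ⊆ insert x (A i))
    (j : κ) : update A i S j ⊆ insert x (univ.biUnion A) := by
  rcases eq_or_ne j i with rfl | hj
  · rw [update_self]
    exact hS.trans (insert_subset_insert x (subset_biUnion_of_mem A (mem_univ j)))
  · rw [update_of_ne hj]
    exact (subset_biUnion_of_mem A (mem_univ j)).trans (subset_insert x _)

theorem IsAugmentingPath.tail {p : ℕ} {u : ℕ → ι} (hA : IsIndepPacking K φ A)
    (hu : IsAugmentingPath K φ A (p + 1) u)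
    (hshort : ∀ t, 2 ≤ t → t ≤ p + 1 → ¬ ExchangeArc K φ A (u 0) (u t))
    (hy : u 1 ∈ A i) (hxs : φ (u 0) ∈ span K (φ '' ↑(A i)))
    (hxy : φ (u 0) ∉ span K (φ '' ↑((A i).erase (u 1)))) :
    IsAugmentingPath K φ (update A i (insert (u 0) ((A i).erase (u 1)))) p
      (fun t => u (t + 1)) := by
  obtain ⟨hfree, harcs, q, hq⟩ := hu
  refine ⟨fun j => ?_, fun t ht => ?_, q, by rwa [span_update_insert_erase hy hxs hxy]⟩
  · rcases eq_or_ne j i with rfl | hj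
    · have hne : u 1 ≠ u 0 := fun h => hfree j (h ▸ hy)
      simp [update_self, hne]
    · rw [update_of_ne hj]
      exact disjoint_left.1 (hA.1 (Ne.symm hj)) hy
  · refine (harcs (t + 1) (by omega)).update_insert_erase hfree hy hxs hxy
      (hshort (t + 2) (by omega) (by omega)) (fun h => ?_) (fun h => ?_)
    · exact hshort (t + 2) (by omega) (by omega) (h ▸ harcs 0 (by omega))
    · exact hshort (t + 2) (by omega) (by omega) (h ▸ harcs (t + 1) (by omega))

/-- Strong induction on the length: a path with a shortcut `u s → u t`, `s + 2 ≤ t`, is shortened;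
otherwise exchanging along its first arc leaves a shorter augmenting path. -/
theorem IsAugmentingPath.exists_augment [Fintype κ] (hA : IsIndepPacking K φ A) {p : ℕ}
    {u : ℕ → ι} (hu : IsAugmentingPath K φ A p u) :
    ∃ (A' : κ → Finset ι) (i₀ : κ), IsIndepPacking K φ A' ∧
      (∀ j, A' j ⊆ insert (u 0) (univ.biUnion A)) ∧
      ∀ j, #(A' j) = #(A j) + if j = i₀ then 1 else 0 := by
  induction p using Nat.strong_induction_on generalizing A u with
  | _ p ih =>
  by_cases hshort : ∃ s t, s + 2 ≤ t ∧ t ≤ p ∧ ExchangeArc K φ A (u s) (u t)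
  · obtain ⟨s, t, hst, htp, harc⟩ := hshort
    simpa using ih _ (by omega) hA (hu.shortcut hst htp harc)
  push Not at hshort
  cases p with
  | zero =>
    obtain ⟨hfree, -, q, hq⟩ := hu
    refine ⟨update A q (insert (u 0) (A q)), q, hA.update_insert hfree hq,
      update_subset_insert_biUnion subset_rfl, fun j => ?_⟩
    rcases eq_or_ne j q with rfl | hj
    · rw [update_self, card_insert_of_notMem (hfree j), if_pos rfl]
    · rw [update_of_ne hj, if_neg hj, add_zero]
  | succ n =>
    obtain ⟨i, hy, -, hxs, hxy⟩ := hu.2.1 0 (by omega)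
    obtain ⟨A', i₀, hA', hsub, hcard⟩ := ih n (by omega) (hA.update_insert_erase hu.1 hxy)
      (hu.tail hA (fun t h2 ht => hshort 0 t h2 ht) hy hxs hxy)
    refine ⟨A', i₀, hA', fun j => (hsub j).trans ?_, fun j => ?_⟩
    · refine insert_subset (mem_insert_of_mem (mem_biUnion.2 ⟨i, mem_univ i, hy⟩)) ?_
      exact biUnion_subset.2 fun j _ =>
        update_subset_insert_biUnion (insert_subset_insert _ (erase_subset _ _)) j
    · rw [hcard j, card_update_insert_erase hu.1 hy]

/-- Edmonds' augmentation step for matroid partition. -/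
theorem IsIndepPacking.exists_augment [Fintype ι] [Fintype κ] {A B : κ → Finset ι}
    (hA : IsIndepPacking K φ A) (hB : IsIndepPacking K φ B)
    (hlt : ∑ j, #(A j) < ∑ j, #(B j)) :
    ∃ x, (∀ j, x ∉ A j) ∧ ∃ (A' : κ → Finset ι) (i₀ : κ), IsIndepPacking K φ A' ∧
      (∀ j, A' j ⊆ insert x (univ.biUnion A)) ∧
      ∀ j, #(A' j) = #(A j) + if j = i₀ then 1 else 0 := by
  obtain ⟨p, u, hu⟩ := exists_isAugmentingPath hA hB hlt
  exact ⟨u 0, hu.1, hu.exists_augment hA⟩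

end Augmentation

theorem sum_range_pow_le_of_lexLE {a b : ℕ → ℕ} {L N : ℕ} (hLN : L < N) (ha : Antitone a)
    (hab : LexLE a b) : ∑ m ∈ range L, N ^ a m ≤ ∑ m ∈ range L, N ^ b m := by
  obtain rfl | ⟨n, heq, hlt⟩ := hab
  · rfl
  have hpre : ∀ L' ≤ n, ∑ m ∈ range L', N ^ a m = ∑ m ∈ range L', N ^ b m := fun L' hL' =>
    sum_congr rfl fun m hm => by rw [heq m (by simp at hm; omega)]
  rcases le_or_gt L n with hLn | hnL
  · exact (hpre L hLn).le
  rw [← sum_range_add_sum_Ico _ hnL.le, ← sum_range_add_sum_Ico (fun m => N ^ b m) hnL.le,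
    hpre n le_rfl]
  refine Nat.add_le_add_left ?_ _
  calc ∑ m ∈ Ico n L, N ^ a m ≤ ∑ m ∈ Ico n L, N ^ a n :=
        sum_le_sum fun m hm => Nat.pow_le_pow_right (by omega) (ha (mem_Ico.1 hm).1)
    _ = (L - n) * N ^ a n := by simp
    _ ≤ N * N ^ a n := Nat.mul_le_mul_right _ (by omega)
    _ = N ^ (a n + 1) := (pow_succ' N (a n)).symm
    _ ≤ N ^ b n := Nat.pow_le_pow_right (by omega) hlt
    _ ≤ ∑ m ∈ Ico n L, N ^ b m :=
        single_le_sum (f := fun m => N ^ b m) (fun _ _ => Nat.zero_le _) (mem_Ico.2 ⟨le_rfl, hnL⟩)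

theorem lexLE_of_sum_range_le {a b : ℕ → ℕ} {ℓ N : ℕ} (hℓN : ℓ ≤ N)
    (ha : ∀ m, N ≤ m → a m = 0) (hb : ∀ m, ℓ ≤ m → b m = 0)
    (htot : ∑ m ∈ range N, a m = ∑ m ∈ range N, b m)
    (hpart : ∀ j ≤ ℓ, ∑ m ∈ range j, a m ≤ ∑ m ∈ range j, b m) : LexLE a b := by
  by_cases hab : a = b
  · exact Or.inl hab
  have hex : ∃ n, a n ≠ b n := by
    by_contra h
    push Not at h
    exact hab (funext h)
  have hmin : ∀ m < Nat.find hex, a m = b m := fun m hm => not_not.1 (Nat.find_min hex hm)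
  refine Or.inr ⟨Nat.find hex, hmin, ?_⟩
  set n := Nat.find hex
  have hne : a n ≠ b n := Nat.find_spec hex
  have hpre : ∀ L ≤ n, ∑ m ∈ range L, a m = ∑ m ∈ range L, b m := fun L hL =>
    sum_congr rfl fun m hm => hmin m (by simp at hm; omega)
  rcases lt_or_ge n ℓ with hnℓ | hℓn
  · have := hpart (n + 1) hnℓ
    rw [sum_range_succ, sum_range_succ, hpre n le_rfl] at this
    omega
  · have hnN : n < N := lt_of_not_ge fun h => hne ((ha n h).trans (hb n hℓn).symm)
    have hbtail : ∑ m ∈ Ico ℓ N, b m = 0 := sum_eq_zero fun m hm => hb m (mem_Ico.1 hm).1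
    have hatail : a n ≤ ∑ m ∈ Ico ℓ N, a m :=
      single_le_sum (f := a) (fun _ _ => Nat.zero_le _) (mem_Ico.2 ⟨hℓn, hnN⟩)
    rw [← sum_range_add_sum_Ico _ hℓN, ← sum_range_add_sum_Ico b hℓN, hbtail, hpre ℓ hℓn] at htot
    have := hb n hℓn
    omega

theorem Fintype.sum_add_add_eq_of_eq_off_pair {κ β : Type*} [Fintype κ] [DecidableEq κ]
    [AddCommMonoid β] {s t : κ → β} {i q : κ} (hiq : i ≠ q)
    (h : ∀ r, r ≠ i → r ≠ q → t r = s r) : ∑ r, t r + s i + s q = ∑ r, s r + t i + t q := by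
  have hq : q ∈ univ.erase i := mem_erase.2 ⟨hiq.symm, mem_univ q⟩
  have hrest : ∑ r ∈ (univ.erase i).erase q, t r = ∑ r ∈ (univ.erase i).erase q, s r :=
    Finset.sum_congr rfl fun r hr =>
      h r (ne_of_mem_erase (mem_of_mem_erase hr)) (ne_of_mem_erase hr)
  rw [← add_sum_erase univ t (mem_univ i), ← add_sum_erase _ t hq,
    ← add_sum_erase univ s (mem_univ i), ← add_sum_erase _ s hq, hrest]
  abel

/-- `t` arises from `s` by moving one unit from entry `q` to the entry `i`, which is at least as
large. -/
theorem Fintype.sum_pow_lt_sum_pow_of_move {κ : Type*} [Fintype κ] [DecidableEq κ]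
    {s t : κ → ℕ} {i q : κ} {N : ℕ} (hN : 2 ≤ N) (hiq : i ≠ q) (hqi : s q ≤ s i)
    (h : ∀ r, t r + (if r = q then 1 else 0) = s r + if r = i then 1 else 0) :
    ∑ r, N ^ s r < ∑ r, N ^ t r := by
  have hi : t i = s i + 1 := by simpa [hiq] using h i
  have hq : t q + 1 = s q := by simpa [hiq.symm] using h q
  have hpot := sum_add_add_eq_of_eq_off_pair (s := fun r => N ^ s r) (t := fun r => N ^ t r) hiq
    fun r h1 h2 => by simpa [h1, h2] using congrArg (N ^ ·) (h r)
  simp only [hi, ← hq] at hpot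
  have hmove : N ^ s i + N ^ (t q + 1) ≤ N ^ (s i + 1) :=
    calc N ^ s i + N ^ (t q + 1) ≤ 2 * N ^ s i := by
          have := Nat.pow_le_pow_right (show 0 < N by omega) (show t q + 1 ≤ s i by omega)
          omega
      _ ≤ N * N ^ s i := Nat.mul_le_mul_right _ hN
      _ = N ^ (s i + 1) := (pow_succ' _ _).symm
  have hpos : 0 < N ^ t q := by positivity
  omega

theorem Antitone.lt_card_filter_ne_zero_iff {n : ℕ} {a : Fin n → ℕ} (ha : Antitone a)
    (m : Fin n) : (m : ℕ) < #{m' | a m' ≠ 0} ↔ a m ≠ 0 := by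
  constructor
  · intro h h0
    have hsub : ({m' | a m' ≠ 0} : Finset (Fin n)) ⊆ Iio m := fun m' hm' =>
      mem_Iio.2 <| lt_of_not_ge fun hle =>
        (mem_filter.1 hm').2 (Nat.eq_zero_of_le_zero (h0 ▸ ha hle))
    have := card_le_card hsub
    rw [Fin.card_Iio] at this
    omega
  · intro h
    have hsub : Iic m ⊆ ({m' | a m' ≠ 0} : Finset (Fin n)) := fun m' hm' =>
      mem_filter.2 ⟨mem_univ _, fun h0 => h (Nat.eq_zero_of_le_zero (h0 ▸ ha (mem_Iic.1 hm')))⟩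
    have := card_le_card hsub
    rw [Fin.card_Iic] at this
    omega

section Partitions
variable {K V : Type*} [Field K] [AddCommGroup V] [Module K V] {M : ℕ} {φ : Fin M → V}
  {Ω : Finset (Fin M)} {k : ℕ} {P : Fin k → Finset (Fin M)}

def partOrEmpty (P : Fin k → Finset (Fin M)) (m : ℕ) : Finset (Fin M) :=
  if h : m < k then P ⟨m, h⟩ else ∅

theorem partOrEmpty_val (P : Fin k → Finset (Fin M)) (i : Fin k) :
    partOrEmpty P i = P i := by
  simp [partOrEmpty]

theorem card_partOrEmpty (P : Fin k → Finset (Fin M)) (m : ℕ) :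
    #(partOrEmpty P m) = PartSizes P m := by
  unfold partOrEmpty PartSizes
  split_ifs <;> rfl

theorem sum_range_partSizes {β : Type*} [AddCommMonoid β] (P : Fin k → Finset (Fin M))
    (f : ℕ → β) : ∑ m ∈ range k, f (PartSizes P m) = ∑ i, f #(P i) := by
  rw [← Fin.sum_univ_eq_sum_range (fun m => f (PartSizes P m))]
  simp [PartSizes]

theorem IsIndepPacking.firstParts (hP : IsIndepPacking K φ P) (j : ℕ) :
    IsIndepPacking K φ (fun m : Fin j => partOrEmpty P m) := by
  refine ⟨fun m m' hmm' => ?_, fun m => ?_⟩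
  · simp only [onFun, _root_.partOrEmpty]
    split_ifs with h h'
    · exact hP.1 fun h'' => hmm' (Fin.ext (by simpa using congrArg Fin.val h''))
    all_goals simp
  · simp only [_root_.partOrEmpty]
    split_ifs
    · exact hP.2 _
    · simp

namespace IsOrderedLIPartitionOn

theorem isIndepPacking (hP : IsOrderedLIPartitionOn K φ Ω P) : IsIndepPacking K φ P :=
  ⟨fun i j h => hP.2.1 i j h, hP.2.2.2.1⟩

theorem antitone_partSizes (hP : IsOrderedLIPartitionOn K φ Ω P) : Antitone (PartSizes P) := by
  intro m m' hmm'
  unfold PartSizes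
  split_ifs with h h'
  · exact hP.2.2.2.2 _ _ (Fin.mk_le_mk.2 hmm')
  · omega
  all_goals simp

theorem sum_range_partSizes_of_le (hP : IsOrderedLIPartitionOn K φ Ω P) {N : ℕ} (hkN : k ≤ N) :
    ∑ m ∈ range N, PartSizes P m = #Ω := by
  have htail : ∑ m ∈ Ico k N, PartSizes P m = 0 :=
    sum_eq_zero fun m hm => dif_neg (by simp at hm; omega)
  rw [← sum_range_add_sum_Ico _ hkN, htail, add_zero]
  refine (sum_range_partSizes P id).trans ?_
  rw [← hP.2.2.1, card_biUnion fun i _ j _ h => hP.2.1 i j h]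
  rfl

theorem sum_range_partSizes_lt (hP : IsOrderedLIPartitionOn K φ Ω P) {j : ℕ} (hjk : j < k) :
    ∑ m ∈ range j, PartSizes P m < #Ω := by
  rw [← hP.sum_range_partSizes_of_le le_rfl]
  refine sum_lt_sum_of_subset (range_subset_range.2 hjk.le) (mem_range.2 hjk) (by simp) ?_
    fun _ _ _ => Nat.zero_le _
  rw [PartSizes, dif_pos hjk]
  exact card_pos.2 (hP.1 _)

end IsOrderedLIPartitionOn

/-- The nonempty parts of `C` sorted by decreasing size; the sum identity says that the size
sequence of `G`, cut off at the number of parts of `C`, is a rearrangement of the sizes in `C`. -/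
theorem IsIndepPacking.exists_isOrderedLIPartitionOn {κ : Type*} [Fintype κ]
    {C : κ → Finset (Fin M)} (hC : IsIndepPacking K φ C) (hcov : univ.biUnion C = Ω) :
    ∃ (k : ℕ) (G : Fin k → Finset (Fin M)), IsOrderedLIPartitionOn K φ Ω G ∧
      ∀ f : ℕ → ℕ, ∑ m ∈ range (Fintype.card κ), f (PartSizes G m) = ∑ i, f #(C i) := by
  set n := Fintype.card κ
  let e : Fin n ≃ κ := (Fintype.equivFin κ).symm
  let s : Fin n → ℕ := fun m => #(C (e m))
  let σ := Tuple.sort (OrderDual.toDual ∘ s)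
  have hanti : Antitone (s ∘ σ) := fun _ _ h => Tuple.monotone_sort (OrderDual.toDual ∘ s) h
  have hkn : #{m | s (σ m) ≠ 0} ≤ n := (card_filter_le _ _).trans (by simp)
  let G : Fin #{m | s (σ m) ≠ 0} → Finset (Fin M) := fun m => C (e (σ (Fin.castLE hkn m)))
  have hG : ∀ m : Fin n, PartSizes G m = s (σ m) := by
    intro m
    unfold PartSizes
    split_ifs with h
    · rfl
    · exact (not_not.1 ((hanti.lt_card_filter_ne_zero_iff m).not.1 h)).symm
  refine ⟨_, G, ⟨fun m => ?_, fun m m' h => ?_, ?_, fun m => hC.2 _, fun m m' h => hanti h⟩,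
    fun f => ?_⟩
  · exact card_pos.1 (Nat.pos_of_ne_zero
      ((hanti.lt_card_filter_ne_zero_iff (Fin.castLE hkn m)).1 m.isLt))
  · exact hC.1 fun h' => h (Fin.castLE_injective hkn (σ.injective (e.injective h')))
  · refine Subset.antisymm
      (biUnion_subset.2 fun m _ => hcov ▸ subset_biUnion_of_mem C (mem_univ _))
      (hcov ▸ biUnion_subset.2 fun i _ z hz => ?_)
    set m := σ.symm (e.symm i)
    have hm : e (σ m) = i := by simp [m]
    have hpos : s (σ m) ≠ 0 := card_ne_zero_of_mem (show z ∈ C (e (σ m)) by rwa [hm])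
    refine mem_biUnion.2 ⟨⟨m, (hanti.lt_card_filter_ne_zero_iff m).2 hpos⟩, mem_univ _, ?_⟩
    show z ∈ C (e (σ (Fin.castLE hkn ⟨m, _⟩)))
    rwa [show Fin.castLE hkn ⟨m, _⟩ = m from rfl, hm]
  · rw [← Fin.sum_univ_eq_sum_range (fun m => f (PartSizes G m))]
    simp only [hG]
    exact (Equiv.sum_comp σ (fun m => f (s m))).trans (Equiv.sum_comp e (fun i => f #(C i)))

end Partitions

section Fundamental
variable {K V : Type*} [Field K] [AddCommGroup V] [Module K V] {M : ℕ} {φ : Fin M → V}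
  {ℓ j : ℕ} {F : Fin ℓ → Finset (Fin M)}

def graft (A' : Fin j → Finset (Fin M)) (F : Fin ℓ → Finset (Fin M)) (x : Fin M) :
    Fin ℓ → Finset (Fin M) :=
  fun i => if h : (i : ℕ) < j then A' ⟨i, h⟩ else (F i).erase x

theorem IsIndepPacking.graft {A' : Fin j → Finset (Fin M)} {x : Fin M}
    (hA' : IsIndepPacking K φ A') (hF : IsIndepPacking K φ F)
    (hsub : ∀ m, A' m ⊆ insert x (univ.biUnion fun m : Fin j => partOrEmpty F m)) :
    IsIndepPacking K φ (graft A' F x) := by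
  have hcross : ∀ (m : Fin j) (i : Fin ℓ), j ≤ i → Disjoint (A' m) ((F i).erase x) := by
    intro m i hji
    refine (disjoint_insert_left.2
      ⟨notMem_erase x _, (disjoint_biUnion_left _ _ _).2 fun m' _ => ?_⟩).mono_left
      (hsub m)
    refine Disjoint.mono_right (erase_subset x _) ?_
    unfold partOrEmpty
    split_ifs with h
    · exact hF.1 fun h' => by have := congrArg Fin.val h'; simp at this; omega
    · exact disjoint_empty_left _
  refine ⟨fun i i' hii' => ?_, fun i => ?_⟩
  · simp only [onFun, _root_.graft]
    split_ifs with h h'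
    · exact hA'.1 fun h'' => hii' (Fin.ext (by simpa using congrArg Fin.val h''))
    · exact hcross _ i' (by omega)
    · exact (hcross _ i (by omega)).symm
    · exact (hF.1 hii').mono (erase_subset x _) (erase_subset x _)
  · simp only [_root_.graft]
    split_ifs
    · exact hA'.2 _
    · exact (hF.2 i).mono (coe_subset.2 (erase_subset x _))

theorem card_graft (hF : Pairwise (Disjoint on F)) (hj : j ≤ ℓ) {A' : Fin j → Finset (Fin M)}
    {i₀ : Fin j} {x : Fin M} {q : Fin ℓ} (hxq : x ∈ F q) (hjq : j ≤ q)
    (hcard : ∀ m, #(A' m) = #(partOrEmpty F m) + if m = i₀ then 1 else 0) (r : Fin ℓ) :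
    #(graft A' F x r) + (if r = q then 1 else 0) =
      #(F r) + if r = Fin.castLE hj i₀ then 1 else 0 := by
  by_cases h : (r : ℕ) < j
  · have hrq : r ≠ q := fun e => by rw [e] at h; omega
    rw [graft, dif_pos h, if_neg hrq, add_zero, hcard]
    congr 1
    · exact congrArg card (partOrEmpty_val F r)
    · simp only [Fin.ext_iff, Fin.val_castLE]
  · have hri : r ≠ Fin.castLE hj i₀ := fun e => h (by rw [e, Fin.val_castLE]; exact i₀.isLt)
    rw [graft, dif_neg h, if_neg hri, add_zero]
    by_cases hrq : r = q
    · subst hrq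
      rw [if_pos rfl]
      exact card_erase_add_one hxq
    · rw [if_neg hrq, add_zero, erase_eq_of_notMem fun h' =>
        hrq (by_contra fun hne => disjoint_left.1 (hF hne) h' hxq)]

/-- If the first `j` parts of `F` could hold more elements, augmenting them by one element taken
from a later, no larger part gives a partition with a larger potential `∑ (ℓ + 2) ^ size`. -/
theorem IsOrderedLIPartitionOn.exists_sum_range_pow_lt (hF : IsOrderedLIPartitionOn K φ univ F)
    (hj : j ≤ ℓ) {k : ℕ} {P : Fin k → Finset (Fin M)} (hP : IsOrderedLIPartitionOn K φ univ P)
    (hlt : ∑ m ∈ range j, PartSizes F m < ∑ m ∈ range j, PartSizes P m) :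
    ∃ (k' : ℕ) (G : Fin k' → Finset (Fin M)), IsOrderedLIPartitionOn K φ univ G ∧
      ∑ m ∈ range ℓ, (ℓ + 2) ^ PartSizes F m < ∑ m ∈ range ℓ, (ℓ + 2) ^ PartSizes G m := by
  have hsum : ∀ {k} (Q : Fin k → Finset (Fin M)),
      ∑ m : Fin j, #(partOrEmpty Q m) = ∑ m ∈ range j, PartSizes Q m := fun Q => by
    simp only [card_partOrEmpty]
    exact Fin.sum_univ_eq_sum_range (PartSizes Q) j
  obtain ⟨x, hx, A', i₀, hA', hsub, hcard⟩ := (hF.isIndepPacking.firstParts j).exists_augment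
    (hP.isIndepPacking.firstParts j) (by rwa [hsum, hsum])
  obtain ⟨q, -, hxq⟩ := mem_biUnion.1 (hF.2.2.1 ▸ mem_univ x)
  have hjq : j ≤ q := by
    by_contra h
    exact hx ⟨q, by omega⟩ (by rwa [partOrEmpty_val])
  have hiq : Fin.castLE hj i₀ ≠ q := fun h => by
    have := congrArg Fin.val h
    simp at this
    omega
  have hC := hA'.graft hF.isIndepPacking hsub
  have hCF := card_graft hF.isIndepPacking.1 hj hxq hjq hcard
  have hcov : univ.biUnion (graft A' F x) = univ := by
    have htot := sum_congr rfl fun r (_ : r ∈ univ) => hCF r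
    simp only [sum_add_distrib, sum_ite_eq', mem_univ, if_true] at htot
    have hFM : ∑ r, #(F r) = M := by
      rw [← card_biUnion fun r _ r' _ h => hF.2.1 r r' h, hF.2.2.1, card_univ, Fintype.card_fin]
    refine eq_univ_of_card _ ?_
    rw [card_biUnion fun r _ r' _ h => hC.1 h, Fintype.card_fin]
    omega
  obtain ⟨k', G, hG, hGsum⟩ := hC.exists_isOrderedLIPartitionOn hcov
  refine ⟨k', G, hG, ?_⟩
  have hGpot := hGsum fun s => (ℓ + 2) ^ s
  rw [Fintype.card_fin] at hGpot
  rw [sum_range_partSizes F, hGpot]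
  exact Fintype.sum_pow_lt_sum_pow_of_move (by omega) hiq
    (hF.2.2.2.2 _ q (Fin.le_def.2 (by simp; omega))) hCF

end Fundamental

/-- An ordered partition `F` of `Φ` into linearly independent sets is a
fundamental partition if and only if it majorizes every ordered partition
`P = {P_1,…,P_k}` of `Φ` into linearly independent sets, i.e. `ℓ ≤ k` and all
partial sums of part sizes of `P` are dominated by those of `F`. -/
theorem isFundamental_iff_majorizes {K V : Type*} [Field K] [AddCommGroup V] [Module K V]
    {M ℓ : ℕ} (φ : Fin M → V) (F : Fin ℓ → Finset (Fin M))
    (hF : IsOrderedLIPartitionOn K φ Finset.univ F) :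
    IsFundamentalOn K φ Finset.univ F ↔
      ∀ (k : ℕ) (P : Fin k → Finset (Fin M)),
        IsOrderedLIPartitionOn K φ Finset.univ P →
          ℓ ≤ k ∧ ∀ j ≤ ℓ,
            ∑ i ∈ Finset.range j, PartSizes P i ≤ ∑ i ∈ Finset.range j, PartSizes F i := by
  constructor
  · intro hfund k P hP
    have hsums : ∀ j ≤ ℓ, ∑ i ∈ range j, PartSizes P i ≤ ∑ i ∈ range j, PartSizes F i := by
      intro j hj
      by_contra! hlt
      obtain ⟨k', G, hG, hpot⟩ := hF.exists_sum_range_pow_lt hj hP hlt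
      exact (sum_range_pow_le_of_lexLE (by omega) hG.antitone_partSizes (hfund.2 k' G hG)).not_gt
        hpot
    refine ⟨le_of_not_gt fun hkℓ => ?_, hsums⟩
    have := hsums k hkℓ.le
    rw [hP.sum_range_partSizes_of_le le_rfl] at this
    exact (hF.sum_range_partSizes_lt hkℓ).not_ge this
  · intro h
    refine ⟨hF, fun k P hP => ?_⟩
    obtain ⟨hℓk, hsums⟩ := h k P hP
    exact lexLE_of_sum_range_le hℓk (fun m hm => dif_neg (by omega))
      (fun m hm => dif_neg (by omega))
      ((hP.sum_range_partSizes_of_le le_rfl).trans (hF.sum_range_partSizes_of_le hℓk).symm) hsums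
end

section
/- Let {F_1,...,F_ℓ} be a fundamental partition of a finite family of vectors Φ = (φ_1,...,φ_M) in a vector space V. Then for all i ≤ j, span(F_j) ⊆ span(F_i). -/
/-! Suppose `x ∈ F j` with `φ x ∉ span (F i)` for some `i < j`. Moving `x` from `F j` to `F i`
gives another partition into linearly independent sets. Parts of equal size may be permuted
freely, so we may take `F i` to be the first part of its size and `F j` the last part of its
size. Then the new part sizes are still non-increasing (after dropping `F j` if it became
empty), and they agree with the old ones before position `i` and exceed them at `i`:
a lexicographically larger size sequence, contradicting maximality. -/

open Finset Function

theorem Antitone.exists_le_eq_forall_lt {α β : Type*} [LinearOrder α] [WellFoundedLT α]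
    [PartialOrder β] {f : α → β} (hf : Antitone f) (a : α) :
    ∃ b ≤ a, f b = f a ∧ ∀ c < b, f a < f c := by
  obtain ⟨b, hb, hmin⟩ := wellFounded_lt.has_min {c | f c = f a} ⟨a, rfl⟩
  refine ⟨b, not_lt.1 (hmin a rfl), hb, fun c hcb => ?_⟩
  exact (hb ▸ hf hcb.le).lt_of_ne fun h => hmin c h.symm hcb

theorem Antitone.exists_ge_eq_forall_gt {α β : Type*} [LinearOrder α] [WellFoundedGT α]
    [PartialOrder β] {f : α → β} (hf : Antitone f) (a : α) :
    ∃ b ≥ a, f b = f a ∧ ∀ c > b, f c < f a :=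
  hf.dual.exists_le_eq_forall_lt (α := αᵒᵈ) a

theorem Fin.exists_iff_lt_of_antitone {ℓ : ℕ} {p : Fin ℓ → Prop} (hp : Antitone p) :
    ∃ n ≤ ℓ, ∀ k : Fin ℓ, p k ↔ (k : ℕ) < n := by
  by_cases h : ∃ k, ¬ p k
  · obtain ⟨b, hb, hmin⟩ := wellFounded_lt.has_min {k | ¬ p k} h
    refine ⟨b, b.isLt.le, fun k => ⟨fun hk => ?_, fun hk => ?_⟩⟩
    · exact Fin.lt_def.1 (lt_of_not_ge fun hbk => hb (hp hbk hk))
    · exact not_not.1 fun hk' => hmin k hk' (Fin.lt_def.2 hk)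
  · push Not at h
    exact ⟨ℓ, le_rfl, fun k => iff_of_true (h k) k.isLt⟩

theorem partSizes_val {M ℓ : ℕ} (F : Fin ℓ → Finset (Fin M)) (k : Fin ℓ) :
    PartSizes F k = #(F k) := by
  simp [PartSizes]

theorem not_lexLE_of_eq_of_lt {a b : ℕ → ℕ} {n : ℕ} (heq : ∀ m < n, a m = b m)
    (hlt : b n < a n) : ¬ LexLE a b := by
  rintro (rfl | ⟨m, hm, hmn⟩)
  · exact lt_irrefl _ hlt
  · rcases lt_trichotomy m n with h | rfl | h
    · exact (heq m h ▸ hmn).false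
    · exact lt_asymm hlt hmn
    · exact (hm n h ▸ hlt).false

def IsLIPartitionOn (K : Type*) {V : Type*} [Field K] [AddCommGroup V] [Module K V] {M ℓ : ℕ}
    (φ : Fin M → V) (Ω : Finset (Fin M)) (F : Fin ℓ → Finset (Fin M)) : Prop :=
  Pairwise (Disjoint on F) ∧ univ.biUnion F = Ω ∧ ∀ k, LinearIndepOn K φ (F k : Set (Fin M))

section Partitions

variable {K V : Type*} [Field K] [AddCommGroup V] [Module K V] {M ℓ : ℕ} {φ : Fin M → V}
  {Ω : Finset (Fin M)}

theorem IsOrderedLIPartitionOn.antitone_card {F : Fin ℓ → Finset (Fin M)}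
    (hF : IsOrderedLIPartitionOn K φ Ω F) : Antitone fun k => #(F k) :=
  fun a b hab => hF.2.2.2.2 a b hab

theorem IsOrderedLIPartitionOn.isLIPartitionOn {F : Fin ℓ → Finset (Fin M)}
    (hF : IsOrderedLIPartitionOn K φ Ω F) : IsLIPartitionOn K φ Ω F :=
  ⟨hF.2.1, hF.2.2.1, hF.2.2.2.1⟩

theorem IsLIPartitionOn.exists_isOrderedLIPartitionOn {F : Fin ℓ → Finset (Fin M)}
    (hF : IsLIPartitionOn K φ Ω F) (hmono : Antitone fun k => #(F k)) :
    ∃ (n : ℕ) (P : Fin n → Finset (Fin M)),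
      IsOrderedLIPartitionOn K φ Ω P ∧ PartSizes P = PartSizes F := by
  obtain ⟨hdisj, hcov, hli⟩ := hF
  have hne : Antitone fun k => (F k).Nonempty := fun a b hab h =>
    card_pos.1 ((card_pos.2 h).trans_le (hmono hab))
  obtain ⟨n, hnℓ, hn⟩ := Fin.exists_iff_lt_of_antitone hne
  refine ⟨n, fun k => F (Fin.castLE hnℓ k), ⟨fun k => (hn _).2 k.isLt,
    fun a b hab => hdisj ((Fin.castLE_injective hnℓ).ne hab), ?_, fun k => hli _,
    fun a b hab => hmono hab⟩, ?_⟩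
  · rw [← hcov]
    ext y
    simp only [mem_biUnion, mem_univ, true_and]
    refine ⟨fun ⟨k, hk⟩ => ⟨_, hk⟩, fun ⟨k, hk⟩ => ⟨⟨k, (hn k).1 ⟨y, hk⟩⟩, hk⟩⟩
  · ext m
    by_cases hm : m < ℓ
    · by_cases hmn : m < n
      · simp [PartSizes, hm, hmn]
      · have hempty : F ⟨m, hm⟩ = ∅ :=
          not_nonempty_iff_eq_empty.1 fun h => hmn ((hn _).1 h)
        simp [PartSizes, hm, hmn, hempty]
    · simp [PartSizes, hm, show ¬ m < n by omega]

theorem IsOrderedLIPartitionOn.comp_perm {F : Fin ℓ → Finset (Fin M)}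
    (hF : IsOrderedLIPartitionOn K φ Ω F) (σ : Equiv.Perm (Fin ℓ))
    (hσ : ∀ k, #(F (σ k)) = #(F k)) : IsOrderedLIPartitionOn K φ Ω (F ∘ σ) := by
  obtain ⟨hne, hdisj, hcov, hli, hmono⟩ := hF
  refine ⟨fun k => hne _, fun a b hab => hdisj _ _ (σ.injective.ne hab), ?_, fun k => hli _,
    fun a b hab => by simpa only [comp_apply, hσ] using hmono a b hab⟩
  rw [← hcov]
  ext y
  simp only [mem_biUnion, mem_univ, true_and, comp_apply]
  exact ⟨fun ⟨k, hk⟩ => ⟨σ k, hk⟩, fun ⟨k, hk⟩ => ⟨σ.symm k, by simpa using hk⟩⟩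

theorem partSizes_comp_perm (F : Fin ℓ → Finset (Fin M)) (σ : Equiv.Perm (Fin ℓ))
    (hσ : ∀ k, #(F (σ k)) = #(F k)) : PartSizes (F ∘ σ) = PartSizes F := by
  ext n
  simp only [PartSizes, comp_apply, hσ]

theorem IsFundamentalOn.comp_perm {F : Fin ℓ → Finset (Fin M)}
    (hF : IsFundamentalOn K φ Ω F) (σ : Equiv.Perm (Fin ℓ))
    (hσ : ∀ k, #(F (σ k)) = #(F k)) : IsFundamentalOn K φ Ω (F ∘ σ) :=
  ⟨hF.1.comp_perm σ hσ, partSizes_comp_perm F σ hσ ▸ hF.2⟩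

def moveTo (F : Fin ℓ → Finset (Fin M)) (x : Fin M) (i : Fin ℓ) :
    Fin ℓ → Finset (Fin M) :=
  fun k => if k = i then insert x (F k) else (F k).erase x

section moveTo

variable {F : Fin ℓ → Finset (Fin M)} {x y : Fin M} {i k : Fin ℓ}

theorem mem_moveTo : y ∈ moveTo F x i k ↔ k = i ∧ y = x ∨ y ≠ x ∧ y ∈ F k := by
  by_cases hk : k = i <;> by_cases hy : y = x <;> simp [moveTo, hk, hy]

theorem moveTo_self : moveTo F x i i = insert x (F i) := if_pos rfl

theorem moveTo_of_ne (hk : k ≠ i) : moveTo F x i k = (F k).erase x := if_neg hk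

theorem moveTo_of_ne_of_notMem (hk : k ≠ i) (hx : x ∉ F k) : moveTo F x i k = F k := by
  rw [moveTo_of_ne hk, erase_eq_of_notMem hx]

theorem IsLIPartitionOn.moveTo (hF : IsLIPartitionOn K φ Ω F) (hxΩ : x ∈ Ω)
    (hx : φ x ∉ Submodule.span K (φ '' F i)) : IsLIPartitionOn K φ Ω (moveTo F x i) := by
  obtain ⟨hdisj, hcov, hli⟩ := hF
  refine ⟨fun a b hab => disjoint_left.2 fun y hya hyb => ?_, ?_, fun k => ?_⟩
  · rcases mem_moveTo.1 hya with ⟨rfl, hyx⟩ | ⟨hyx, hya⟩ <;>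
      rcases mem_moveTo.1 hyb with ⟨rfl, hyx'⟩ | ⟨hyx', hyb⟩
    exacts [hab rfl, hyx' hyx, hyx hyx', disjoint_left.1 (hdisj hab) hya hyb]
  · rw [← hcov]
    ext y
    simp only [mem_biUnion, mem_univ, true_and, mem_moveTo]
    by_cases hy : y = x
    · subst hy
      have hyF : ∃ k, y ∈ F k := by simpa [← hcov] using hxΩ
      exact iff_of_true ⟨i, .inl ⟨rfl, rfl⟩⟩ hyF
    · simp [hy]
  · by_cases hk : k = i
    · have hxi : x ∉ (F i : Set (Fin M)) := fun h => hx (Submodule.subset_span ⟨x, h, rfl⟩)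
      rw [hk, moveTo_self, coe_insert]
      exact (linearIndepOn_insert hxi).2 ⟨hli i, hx⟩
    · rw [moveTo_of_ne hk]
      exact (hli k).mono (coe_subset.2 (erase_subset x _))

theorem antitone_card_moveTo {j : Fin ℓ} (hdisj : Pairwise (Disjoint on F))
    (hmono : Antitone fun k => #(F k)) (hij : i < j) (hx : x ∈ F j)
    (hi : ∀ k < i, #(F i) < #(F k)) (hj : ∀ k > j, #(F k) < #(F j)) :
    Antitone fun k => #(moveTo F x i k) := by
  have hxF : ∀ k ≠ j, x ∉ F k := fun k hk h => disjoint_left.1 (hdisj hk) h hx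
  have hcard_i : #(moveTo F x i i) = #(F i) + 1 := by
    rw [moveTo_self, card_insert_of_notMem (hxF i hij.ne)]
  have hcard_j : #(moveTo F x i j) = #(F j) - 1 := by
    rw [moveTo_of_ne hij.ne', card_erase_of_mem hx]
  have hle : ∀ k ≠ i, #(moveTo F x i k) ≤ #(F k) := fun k hk => by
    rw [moveTo_of_ne hk]
    exact card_erase_le
  have hge : ∀ k ≠ j, #(F k) ≤ #(moveTo F x i k) := fun k hk => by
    by_cases hki : k = i
    · rw [hki, moveTo_self]
      exact card_le_card (subset_insert x _)
    · rw [moveTo_of_ne_of_notMem hki (hxF k hk)]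
  intro a b hab
  rcases hab.eq_or_lt with rfl | hab
  · rfl
  by_cases hb : b = i
  · subst hb
    calc #(moveTo F x b b) = #(F b) + 1 := hcard_i
      _ ≤ #(F a) := hi a hab
      _ ≤ #(moveTo F x b a) := hge a (hab.trans hij).ne
  by_cases ha : a = j
  · subst ha
    calc #(moveTo F x i b) ≤ #(F b) := hle b hb
      _ ≤ #(F a) - 1 := Nat.le_sub_one_of_lt (hj b hab)
      _ = #(moveTo F x i a) := hcard_j.symm
  · calc #(moveTo F x i b) ≤ #(F b) := hle b hb
      _ ≤ #(F a) := hmono hab.le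
      _ ≤ #(moveTo F x i a) := hge a ha

end moveTo

theorem IsFundamentalOn.span_le_of_lt {F : Fin ℓ → Finset (Fin M)}
    (hF : IsFundamentalOn K φ Ω F) {i j : Fin ℓ} (hij : i < j) (hi : ∀ k < i, #(F i) < #(F k))
    (hj : ∀ k > j, #(F k) < #(F j)) :
    Submodule.span K (φ '' F j) ≤ Submodule.span K (φ '' F i) := by
  rw [Submodule.span_le]
  rintro _ ⟨x, hx, rfl⟩
  by_contra hxi
  obtain ⟨hFpart, hmax⟩ := hF
  have hxΩ : x ∈ Ω := hFpart.2.2.1 ▸ mem_biUnion.2 ⟨j, mem_univ _, hx⟩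
  obtain ⟨n, P, hP, hPsizes⟩ :=
    (hFpart.isLIPartitionOn.moveTo hxΩ hxi).exists_isOrderedLIPartitionOn
      (antitone_card_moveTo hFpart.2.1 hFpart.antitone_card hij hx hi hj)
  have hxF : ∀ k ≠ j, x ∉ F k := fun k hk h => disjoint_left.1 (hFpart.2.1 k j hk) h hx
  refine not_lexLE_of_eq_of_lt (n := i) (fun m hm => ?_) ?_ (hPsizes ▸ hmax n P hP)
  · obtain ⟨k, rfl⟩ : ∃ k : Fin ℓ, (k : ℕ) = m := ⟨⟨m, hm.trans i.isLt⟩, rfl⟩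
    have hki : k < i := hm
    rw [partSizes_val, partSizes_val, moveTo_of_ne_of_notMem hki.ne (hxF k (hki.trans hij).ne)]
  · rw [partSizes_val, partSizes_val, moveTo_self, card_insert_of_notMem (hxF i hij.ne)]
    exact lt_add_one _

end Partitions

/-- In a fundamental partition `{F_1,…,F_ℓ}` of `Φ`, the spans are nested:
`span(F_j) ⊆ span(F_i)` whenever `i ≤ j`. -/
theorem span_antitone_of_fundamental {K V : Type*} [Field K] [AddCommGroup V] [Module K V]
    {M ℓ : ℕ} (φ : Fin M → V) (F : Fin ℓ → Finset (Fin M))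
    (hF : IsFundamentalOn K φ Finset.univ F) {i j : Fin ℓ} (hij : i ≤ j) :
    Submodule.span K (φ '' ↑(F j)) ≤ Submodule.span K (φ '' ↑(F i)) := by
  rcases hij.eq_or_lt with rfl | hij
  · exact le_rfl
  have hmono := hF.1.antitone_card
  obtain ⟨t, hti, hct, ht⟩ := hmono.exists_le_eq_forall_lt i
  obtain ⟨u, hju, hcu, hu⟩ := hmono.exists_ge_eq_forall_gt j
  let σ := Equiv.swap t i * Equiv.swap u j
  have hσ : ∀ k, #(F (σ k)) = #(F k) := fun k => by
    simp only [σ, Equiv.Perm.mul_apply, Equiv.apply_swap_eq_self (v := fun k => #(F k)) hct,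
      Equiv.apply_swap_eq_self (v := fun k => #(F k)) hcu]
  have htu : t < u := hti.trans_lt (hij.trans_le hju)
  have hσt : σ t = i := by
    simp [σ, Equiv.swap_apply_of_ne_of_ne htu.ne (hti.trans_lt hij).ne]
  have hσu : σ u = j := by
    simp [σ, Equiv.swap_apply_of_ne_of_ne (hti.trans_lt hij).ne' hij.ne']
  simpa [hσt, hσu] using (hF.comp_perm σ hσ).span_le_of_lt htu
    (by simpa [hσ, hσt, hct] using ht) (by simpa [hσ, hσu, hcu] using hu)
end

section
/- Let Φ = (φ_1,...,φ_M) be a finite family of vectors in a vector space V with fundamental partition {F_1,...,F_ℓ}, and let k < ℓ. Then there exists a subset J of the index set with |J| > k · dim span(φ_j : j ∈ J); explicitly, for any index m ∈ F_ℓ and any k-transversal T of {F_1,...,F_k} with φ_m ∈ span(T), the set J = T ∪ {m} satisfies |J| = k · dim span(φ_j : j ∈ T) + 1 and dim span(φ_j : j ∈ J) = dim span(φ_j : j ∈ T), hence |J|/dim span(φ_j : j ∈ J) = k + 1/dim span(φ_j : j ∈ T) > k. -/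
open Finset Submodule Module Function

/-!
Fix `m` in the last part and let it float: repeatedly swap the floating element `z` with an
element `x` of another part `F i` such that `φ z ∉ span (F i \ {x})`. Every part stays independent
and keeps its size, so if ever `φ z ∉ span (F i)`, moving `z` into `F i` and reordering the parts
would raise the size sequence lexicographically. For a fundamental partition the floating vector
therefore lies in the span of every other part, and its fundamental circuit there consists of
elements that can float next. Let `Z` be the set of elements that can float: a swap never enlarges
`span (F i ∩ Z)`, so each `F i ∩ Z` spans `φ '' Z`. These sets form a transversal whose span
contains `φ m`, and counting it gives the violating set.
-/

section SwapImage

variable {α : Type*} [DecidableEq α]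

lemma Finset.image_swap_subset_insert_erase {s : Finset α} {z x : α} (hz : z ∉ s) :
    s.image (Equiv.swap z x) ⊆ insert z (s.erase x) := by
  intro y hy
  obtain ⟨w, hw, rfl⟩ := mem_image.1 hy
  rcases eq_or_ne w x with rfl | hwx
  · simp
  · rw [Equiv.swap_apply_of_ne_of_ne (by rintro rfl; exact hz hw) hwx]
    exact mem_insert_of_mem (mem_erase.2 ⟨hwx, hw⟩)

lemma Finset.image_swap_of_notMem {s : Finset α} {z x : α} (hz : z ∉ s) (hx : x ∉ s) :
    s.image (Equiv.swap z x) = s := by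
  conv_rhs => rw [← image_id (s := s)]
  exact image_congr fun w hw => Equiv.swap_apply_of_ne_of_ne (by rintro rfl; exact hz hw)
    (by rintro rfl; exact hx hw)

end SwapImage

section LinearAlgebra

variable {K V ι : Type*} [Field K] [AddCommGroup V] [Module K V] {φ : ι → V}

lemma LinearIndepOn.finrank_span_image_eq_card {S : Finset ι} (hS : LinearIndepOn K φ ↑S) :
    finrank K (span K (φ '' ↑S)) = S.card := by
  rw [Set.image_eq_range, finrank_span_eq_card hS]
  simp

lemma LinearIndepOn.mem_span_image_circuit [DecidableEq ι] {G : Finset ι}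
    (hG : LinearIndepOn K φ ↑G) {v : V} (hv : v ∈ span K (φ '' ↑G)) :
    v ∈ span K (φ '' {x ∈ (G : Set ι) | v ∉ span K (φ '' ↑(G.erase x))}) := by
  obtain ⟨l, hl, rfl⟩ := (Finsupp.mem_span_image_iff_linearCombination K).1 hv
  refine (Finsupp.mem_span_image_iff_linearCombination K).2
    ⟨l, fun x hx => ⟨hl hx, fun hmem => ?_⟩, rfl⟩
  obtain ⟨l', hl', hll'⟩ := (Finsupp.mem_span_image_iff_linearCombination K).1 hmem
  have hl'G : l' ∈ Finsupp.supported K K ↑G := hl'.trans (coe_subset.2 (erase_subset x G))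
  obtain rfl := linearIndepOn_iffₛ.1 hG l hl l' hl'G hll'.symm
  simpa using hl' hx

lemma LinearIndepOn.insert_erase_of_notMem_span [DecidableEq ι] {G : Finset ι}
    (hG : LinearIndepOn K φ ↑G) {z x : ι} (hz : φ z ∉ span K (φ '' ↑(G.erase x))) :
    LinearIndepOn K φ ↑(insert z (G.erase x)) := by
  rw [coe_insert]
  exact (hG.mono (by simp)).insert hz

lemma card_biUnion_eq_mul_finrank_span [DecidableEq ι] {κ : Type*} [Fintype κ]
    {S : κ → Finset ι}
    (hdisj : Pairwise (Disjoint on S)) (hli : ∀ i, LinearIndepOn K φ ↑(S i))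
    (hspan : ∀ i j, span K (φ '' ↑(S i)) = span K (φ '' ↑(S j))) :
    (univ.biUnion S).card = Fintype.card κ * finrank K (span K (φ '' ↑(univ.biUnion S))) := by
  have hT : ∀ i, span K (φ '' ↑(S i)) = span K (φ '' ↑(univ.biUnion S)) := by
    refine fun i => le_antisymm
      (span_mono (Set.image_mono (coe_subset.2 (subset_biUnion_of_mem S (mem_univ i))))) ?_
    rw [span_le]
    rintro _ ⟨x, hx, rfl⟩
    obtain ⟨j, -, hxj⟩ := mem_biUnion.1 hx
    exact hspan j i ▸ subset_span ⟨x, hxj, rfl⟩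
  calc (univ.biUnion S).card = ∑ i, (S i).card := card_biUnion (hdisj.set_pairwise _)
    _ = ∑ _i : κ, finrank K (span K (φ '' ↑(univ.biUnion S))) :=
        sum_congr rfl fun i _ => by rw [← (hli i).finrank_span_image_eq_card, hT i]
    _ = _ := by rw [sum_const, card_univ, smul_eq_mul]

end LinearAlgebra

section Partitions

def IsLIPartition (K : Type*) {V : Type*} [Field K] [AddCommGroup V] [Module K V] {M ℓ : ℕ}
    (φ : Fin M → V) (Q : Fin ℓ → Finset (Fin M)) : Prop :=
  Pairwise (Disjoint on Q) ∧ univ.biUnion Q = univ ∧ ∀ i, LinearIndepOn K φ ↑(Q i)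

variable {K V : Type*} [Field K] [AddCommGroup V] [Module K V] {M : ℕ} {φ : Fin M → V}

lemma IsLIPartition.comp_perm {ℓ : ℕ} {Q : Fin ℓ → Finset (Fin M)}
    (hQ : IsLIPartition K φ Q) (ρ : Equiv.Perm (Fin ℓ)) : IsLIPartition K φ (Q ∘ ρ) := by
  refine ⟨hQ.1.comp_of_injective ρ.injective, ?_, fun i => hQ.2.2 (ρ i)⟩
  rw [← hQ.2.1]
  ext x
  simp only [mem_biUnion, mem_univ, true_and, Function.comp_apply]
  exact ⟨fun ⟨_, h⟩ => ⟨_, h⟩, fun ⟨a, h⟩ => ⟨ρ.symm a, by simpa using h⟩⟩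

lemma not_lexLE_of_lt {a b : ℕ → ℕ} {u : ℕ} (heq : ∀ j < u, a j = b j) (hlt : b u < a u) :
    ¬ LexLE a b := by
  rintro (rfl | ⟨j, hj, hj'⟩)
  · exact hlt.false
  rcases lt_trichotomy j u with h | rfl | h
  · exact (heq j h ▸ hj').false
  · exact hlt.not_gt hj'
  · exact (hj u h ▸ hlt).false

variable {n : ℕ} {F P Q : Fin (n + 1) → Finset (Fin M)}

lemma partSizes_comp_castSucc (hP : P (Fin.last n) = ∅) :
    PartSizes (P ∘ Fin.castSucc) = PartSizes P := by
  funext j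
  unfold PartSizes
  split_ifs with h₁ h₂ h₂
  · rfl
  · omega
  · rw [show (⟨j, h₂⟩ : Fin (n + 1)) = Fin.last n from Fin.ext (by simp; omega), hP,
      card_empty]
  · rfl

lemma IsFundamentalOn.lexLE_of_isLIPartition (hF : IsFundamentalOn K φ univ F)
    (hP : IsLIPartition K φ P) (hne : ∀ j ≠ Fin.last n, (P j).Nonempty)
    (hanti : ∀ i j, i ≤ j → (P j).card ≤ (P i).card) :
    LexLE (PartSizes P) (PartSizes F) := by
  by_cases hlast : (P (Fin.last n)).Nonempty
  · refine hF.2 _ P ⟨fun j => ?_, hP.1, hP.2.1, hP.2.2, hanti⟩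
    rcases eq_or_ne j (Fin.last n) with rfl | hj
    exacts [hlast, hne j hj]
  rw [not_nonempty_iff_eq_empty] at hlast
  rw [← partSizes_comp_castSucc hlast]
  refine hF.2 _ _ ⟨fun j => hne _ (Fin.castSucc_ne_last j),
    hP.1.comp_of_injective (Fin.castSucc_injective n), ?_, fun j => hP.2.2 _,
    fun i j hij => hanti _ _ (Fin.castSucc_le_castSucc_iff.2 hij)⟩
  rw [← hP.2.1]
  ext x
  simp only [mem_biUnion, mem_univ, true_and, Function.comp_apply]
  refine ⟨fun ⟨j, hj⟩ => ⟨_, hj⟩, fun ⟨j, hj⟩ => ?_⟩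
  rcases Fin.eq_castSucc_or_eq_last j with ⟨j, rfl⟩ | rfl
  exacts [⟨j, hj⟩, by simp [hlast] at hj]

end Partitions

section Shift

variable {K V : Type*} [Field K] [AddCommGroup V] [Module K V] {M n : ℕ} {φ : Fin M → V}

/-- The part sizes of `Q` are those of `F` with one element moved from the last part to part `i`
(stated additively, to avoid truncated subtraction). -/
def CardShift (F Q : Fin (n + 1) → Finset (Fin M)) (i : Fin (n + 1)) : Prop :=
  ∀ j, (Q j).card + (if j = Fin.last n then 1 else 0) = (F j).card + (if j = i then 1 else 0)

variable {F Q G : Fin (n + 1) → Finset (Fin M)} {u : Fin (n + 1)}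

lemma CardShift.card_antitone (hQF : CardShift F Q u)
    (hFanti : ∀ i j, i ≤ j → (F j).card ≤ (F i).card) (hu : u ≠ Fin.last n)
    (hfirst : ∀ j < u, (F u).card < (F j).card) :
    ∀ i j, i ≤ j → (Q j).card ≤ (Q i).card := by
  intro i j hij
  rcases eq_or_ne i j with rfl | hij'
  · exact le_rfl
  have hil : i ≠ Fin.last n := fun h => hij' (le_antisymm hij (h ▸ Fin.le_last j))
  have h1 := hQF i
  have h2 := hQF j
  rw [if_neg hil] at h1
  by_cases hj : j = u
  · subst hj
    have := hfirst i (lt_of_le_of_ne hij hij')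
    rw [if_neg hij', if_neg hu, if_pos rfl] at *
    omega
  · have := hFanti i j hij
    rw [if_neg hj] at h2
    split_ifs at h1 h2 <;> omega

lemma IsFundamentalOn.not_cardShift_of_lt (hF : IsFundamentalOn K φ univ F)
    (hQ : IsLIPartition K φ Q) (hu : u ≠ Fin.last n)
    (hfirst : ∀ j < u, (F u).card < (F j).card) : ¬ CardShift F Q u := by
  intro hQF
  have hne : ∀ j ≠ Fin.last n, (Q j).Nonempty := by
    intro j hj
    have := hQF j
    have := card_pos.2 (hF.1.1 j)
    rw [if_neg hj] at *
    exact card_pos.1 (by split_ifs at * <;> omega)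
  have hanti := hQF.card_antitone hF.1.2.2.2.2 hu hfirst
  refine not_lexLE_of_lt (u := u) (fun j hj => ?_) ?_ (hF.lexLE_of_isLIPartition hQ hne hanti)
  · have hj' : j < n + 1 := hj.trans u.2
    have := hQF ⟨j, hj'⟩
    simp only [PartSizes, dif_pos hj']
    rw [if_neg (fun h => by simp [Fin.ext_iff] at h; omega),
      if_neg (fun h => by simp [Fin.ext_iff] at h; omega)] at this
    omega
  · have := hQF u
    simp only [PartSizes, dif_pos u.2, Fin.eta]
    rw [if_neg hu, if_pos rfl] at this
    omega

lemma IsFundamentalOn.not_cardShift {i : Fin (n + 1)} (hF : IsFundamentalOn K φ univ F)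
    (hQ : IsLIPartition K φ Q) (hi : i ≠ Fin.last n) : ¬ CardShift F Q i := by
  intro hQF
  obtain ⟨u, hu, hmin⟩ := exists_min_image (univ.filter fun j => (F j).card = (F i).card) id
    ⟨i, by simp⟩
  simp only [mem_filter, mem_univ, true_and, id] at hu hmin
  have hui : u ≤ i := hmin i rfl
  have hfirst : ∀ j < u, (F u).card < (F j).card := fun j hj =>
    lt_of_le_of_ne (hF.1.2.2.2.2 j u hj.le) fun h => (hmin j (h.symm.trans hu)).not_gt hj
  have hu_last : u ≠ Fin.last n :=
    ne_of_lt (lt_of_le_of_lt hui (lt_of_le_of_ne (Fin.le_last i) hi))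
  -- Moving the shift to the first part of the same size keeps the sizes non-increasing.
  refine hF.not_cardShift_of_lt (hQ.comp_perm (Equiv.swap u i)) hu_last hfirst fun j => ?_
  simp only [Function.comp_apply]
  by_cases hju : j = u
  · have := hQF i
    rw [hju, Equiv.swap_apply_left, if_neg hu_last, if_pos rfl, hu]
    rwa [if_neg hi, if_pos rfl] at this
  by_cases hji : j = i
  · have := hQF u
    rw [hji, Equiv.swap_apply_right, if_neg hi, if_neg (hji ▸ hju), ← hu]
    rwa [if_neg hu_last, if_neg (hji ▸ Ne.symm hju)] at this
  rw [Equiv.swap_apply_of_ne_of_ne hju hji, hQF j, if_neg hji, if_neg hju]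

lemma exists_isLIPartition_cardShift (hdisj : Pairwise (Disjoint on G))
    (hcover : univ.biUnion G = univ) {z : Fin M} (hz : z ∈ G (Fin.last n))
    (hli : ∀ j, LinearIndepOn K φ ↑((G j).erase z)) {i : Fin (n + 1)} (hi : i ≠ Fin.last n)
    (hzi : φ z ∉ span K (φ '' ↑(G i))) :
    ∃ Q, IsLIPartition K φ Q ∧ CardShift G Q i := by
  have hzG : ∀ j ≠ Fin.last n, z ∉ G j := fun j hj hzj =>
    disjoint_left.1 (hdisj hj) hzj hz
  refine ⟨fun j => if j = i then insert z (G j) else (G j).erase z, ⟨?_, ?_, ?_⟩, ?_⟩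
  · intro a b hab
    have hGab := hdisj hab
    simp only [onFun]
    split_ifs with ha hb hb
    · exact absurd (ha.trans hb.symm) hab
    · exact disjoint_insert_left.2 ⟨notMem_erase z _, hGab.mono_right (erase_subset z _)⟩
    · exact disjoint_insert_right.2 ⟨notMem_erase z _, hGab.mono_left (erase_subset z _)⟩
    · exact hGab.mono (erase_subset z _) (erase_subset z _)
  · refine eq_univ_of_forall fun x => ?_
    obtain ⟨j, -, hx⟩ := mem_biUnion.1 (hcover ▸ mem_univ x : x ∈ univ.biUnion G)
    rw [mem_biUnion]
    by_cases hxz : x = z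
    · exact ⟨i, mem_univ _, by simp [hxz]⟩
    · refine ⟨j, mem_univ _, ?_⟩
      split_ifs
      exacts [mem_insert_of_mem hx, mem_erase.2 ⟨hxz, hx⟩]
  · intro j
    dsimp only
    split_ifs with hj
    · subst hj
      have := hli j
      rw [erase_eq_of_notMem (hzG j hi)] at this
      rw [coe_insert]
      exact this.insert hzi
    · exact hli j
  · intro j
    dsimp only
    by_cases hji : j = i
    · subst hji
      rw [if_pos rfl, if_pos rfl, if_neg hi, card_insert_of_notMem (hzG j hi)]
    rw [if_neg hji, if_neg hji]
    by_cases hjl : j = Fin.last n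
    · rw [if_pos hjl, hjl, card_erase_add_one hz, add_zero]
    · rw [if_neg hjl, erase_eq_of_notMem (hzG j hjl)]

end Shift

section Exchange

/-- States of the exchange process started at `m`: in state `σ` the parts are `(F j).image σ`
and the floating element is `σ m`, which stays in the last part. A step swaps `σ m` with an
element `x` of another part whose removal takes `φ (σ m)` out of that part's span. -/
inductive ExchangeReachable (K : Type*) {V : Type*} [Field K] [AddCommGroup V] [Module K V]
    {M n : ℕ} (φ : Fin M → V) (F : Fin (n + 1) → Finset (Fin M)) (m : Fin M) :
    Equiv.Perm (Fin M) → Prop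
  | refl : ExchangeReachable K φ F m 1
  | swap {σ : Equiv.Perm (Fin M)} {i : Fin (n + 1)} {x : Fin M} :
      ExchangeReachable K φ F m σ → i ≠ Fin.last n → x ∈ (F i).image σ →
      φ (σ m) ∉ span K (φ '' ↑(((F i).image σ).erase x)) →
      ExchangeReachable K φ F m (Equiv.swap (σ m) x * σ)

variable {K V : Type*} [Field K] [AddCommGroup V] [Module K V] {M n : ℕ} {φ : Fin M → V}
  {F : Fin (n + 1) → Finset (Fin M)} {m : Fin M}

lemma IsOrderedLIPartitionOn.apply_notMem_image (hF : IsOrderedLIPartitionOn K φ univ F)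
    (hm : m ∈ F (Fin.last n)) (σ : Equiv.Perm (Fin M)) {i : Fin (n + 1)}
    (hi : i ≠ Fin.last n) : σ m ∉ (F i).image σ :=
  fun h => disjoint_left.1 (hF.2.1 i _ hi) (σ.injective.mem_finset_image.1 h) hm

lemma ExchangeReachable.linearIndepOn_erase {σ : Equiv.Perm (Fin M)}
    (hF : IsOrderedLIPartitionOn K φ univ F) (hm : m ∈ F (Fin.last n))
    (h : ExchangeReachable K φ F m σ) (j : Fin (n + 1)) :
    LinearIndepOn K φ ↑(((F j).image σ).erase (σ m)) := by
  have hFli : ∀ j, LinearIndepOn K φ ↑(F j) := hF.2.2.2.1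
  induction h generalizing j with
  | refl =>
    simp only [Equiv.Perm.coe_one, image_id]
    exact (hFli j).mono (coe_subset.2 (erase_subset _ _))
  | @swap σ i x hσ hi hx hzx ih =>
    have hdisj : ∀ a b, a ≠ b → Disjoint ((F a).image σ) ((F b).image σ) := fun a b hab =>
      (disjoint_image σ.injective).2 (hF.2.1 a b hab)
    have hzG : ∀ a ≠ Fin.last n, σ m ∉ (F a).image σ := fun _ => hF.apply_notMem_image hm σ
    have hstep : ((F j).image (Equiv.swap (σ m) x * σ)).erase x =
        (((F j).image σ).erase (σ m)).image (Equiv.swap (σ m) x) := by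
      rw [Equiv.Perm.coe_mul, ← image_image, image_erase (Equiv.swap _ _).injective,
        Equiv.swap_apply_left]
    rw [Equiv.Perm.mul_apply, Equiv.swap_apply_left, hstep]
    rcases eq_or_ne j i with rfl | hji
    · have hG := ih j
      rw [erase_eq_of_notMem (hzG j hi)] at hG ⊢
      exact (hG.insert_erase_of_notMem_span hzx).mono
        (coe_subset.2 (image_swap_subset_insert_erase (hzG j hi)))
    · rw [image_swap_of_notMem (notMem_erase _ _)
        (fun h => disjoint_left.1 (hdisj i j (Ne.symm hji)) hx (mem_of_mem_erase h))]
      exact ih j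

variable {σ : Equiv.Perm (Fin M)} {i : Fin (n + 1)}

lemma ExchangeReachable.mem_span (hF : IsFundamentalOn K φ univ F) (hm : m ∈ F (Fin.last n))
    (h : ExchangeReachable K φ F m σ) (hi : i ≠ Fin.last n) :
    φ (σ m) ∈ span K (φ '' ↑((F i).image σ)) := by
  by_contra hzi
  obtain ⟨Q, hQ, hshift⟩ := exists_isLIPartition_cardShift
    (fun a b hab => (disjoint_image σ.injective).2 (hF.1.2.1 a b hab))
    (by rw [← biUnion_image, hF.1.2.2.1, image_univ_equiv]) (mem_image_of_mem σ hm)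
    (h.linearIndepOn_erase hF.1 hm) hi hzi
  exact hF.not_cardShift hQ hi fun j => (hshift j).trans
    (by rw [card_image_of_injective _ σ.injective])

variable {Z : Finset (Fin M)}

lemma ExchangeReachable.mem_span_inter (hF : IsFundamentalOn K φ univ F)
    (hm : m ∈ F (Fin.last n)) (hZ : ∀ τ, ExchangeReachable K φ F m τ → τ m ∈ Z)
    (h : ExchangeReachable K φ F m σ) (hi : i ≠ Fin.last n) :
    φ (σ m) ∈ span K (φ '' ↑((F i).image σ ∩ Z)) := by
  have hG := h.linearIndepOn_erase hF.1 hm i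
  rw [erase_eq_of_notMem (hF.1.apply_notMem_image hm σ hi)] at hG
  refine span_mono (Set.image_mono ?_) (hG.mem_span_image_circuit (h.mem_span hF hm hi))
  rintro x ⟨hx, hzx⟩
  have := hZ _ (h.swap hi hx hzx)
  rw [Equiv.Perm.mul_apply, Equiv.swap_apply_left] at this
  exact mem_coe.2 (mem_inter.2 ⟨hx, this⟩)

lemma ExchangeReachable.span_inter_le (hF : IsFundamentalOn K φ univ F)
    (hm : m ∈ F (Fin.last n)) (hZ : ∀ τ, ExchangeReachable K φ F m τ → τ m ∈ Z)
    (h : ExchangeReachable K φ F m σ) (hi : i ≠ Fin.last n) :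
    span K (φ '' ↑((F i).image σ ∩ Z)) ≤ span K (φ '' ↑(F i ∩ Z)) := by
  induction h with
  | refl => simp
  | @swap σ j x hσ hj hx hzx ih =>
    have hzG := hF.1.apply_notMem_image hm σ hi
    have hsub :
        (F i).image (Equiv.swap (σ m) x * σ) ∩ Z ⊆ insert (σ m) ((F i).image σ ∩ Z) := by
      rw [Equiv.Perm.coe_mul, ← image_image]
      intro y hy
      obtain ⟨hyG, hyZ⟩ := mem_inter.1 hy
      rcases mem_insert.1 (image_swap_subset_insert_erase hzG hyG) with rfl | hyG
      · exact mem_insert_self _ _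
      · exact mem_insert_of_mem (mem_inter.2 ⟨mem_of_mem_erase hyG, hyZ⟩)
    calc span K (φ '' ↑((F i).image (Equiv.swap (σ m) x * σ) ∩ Z))
        ≤ span K (φ '' ↑(insert (σ m) ((F i).image σ ∩ Z))) :=
          span_mono (Set.image_mono (coe_subset.2 hsub))
      _ = span K (φ '' ↑((F i).image σ ∩ Z)) := by
          rw [coe_insert, Set.image_insert_eq,
            span_insert_eq_span (hσ.mem_span_inter hF hm hZ hi)]
      _ ≤ span K (φ '' ↑(F i ∩ Z)) := ih

lemma IsFundamentalOn.exists_span_inter_eq (hF : IsFundamentalOn K φ univ F)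
    (hm : m ∈ F (Fin.last n)) :
    ∃ Z : Finset (Fin M), m ∈ Z ∧
      ∀ i ≠ Fin.last n, span K (φ '' ↑(F i ∩ Z)) = span K (φ '' ↑Z) := by
  classical
  set Z := univ.filter fun y => ∃ σ, ExchangeReachable K φ F m σ ∧ σ m = y
  have hZ : ∀ τ, ExchangeReachable K φ F m τ → τ m ∈ Z :=
    fun τ hτ => mem_filter.2 ⟨mem_univ _, τ, hτ, rfl⟩
  refine ⟨Z, hZ 1 .refl, fun i hi =>
    le_antisymm (span_mono (Set.image_mono (coe_subset.2 inter_subset_right))) ?_⟩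
  rw [span_le]
  rintro _ ⟨y, hy, rfl⟩
  obtain ⟨σ, hσ, rfl⟩ := (mem_filter.1 hy).2
  exact hσ.span_inter_le hF hm hZ hi (hσ.mem_span_inter hF hm hZ hi)

end Exchange

section Transversal

lemma Fin.castLE_ne_of_le {k ℓ : ℕ} (hkℓ : k ≤ ℓ) {a : Fin ℓ} (ha : k ≤ a)
    (i : Fin k) : Fin.castLE hkℓ i ≠ a :=
  ne_of_apply_ne Fin.val (by simp only [Fin.val_castLE]; omega)

variable {K V : Type*} [Field K] [AddCommGroup V] [Module K V]
  {M ℓ k : ℕ} {φ : Fin M → V} {F : Fin ℓ → Finset (Fin M)}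

lemma card_insert_transversal (hF : IsOrderedLIPartitionOn K φ univ F) {κ : Type*} [Fintype κ]
    {ι : κ → Fin ℓ} (hι : Injective ι) {a : Fin ℓ} (ha : ∀ i, ι i ≠ a) {m : Fin M}
    (hm : m ∈ F a) {S : κ → Finset (Fin M)} (hS : ∀ i, S i ⊆ F (ι i))
    (hspan : ∀ i j, span K (φ '' ↑(S i)) = span K (φ '' ↑(S j)))
    (hmS : φ m ∈ span K (φ '' ↑(univ.biUnion S))) :
    (insert m (univ.biUnion S)).card =
        Fintype.card κ * finrank K (span K (φ '' ↑(univ.biUnion S))) + 1 ∧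
      finrank K (span K (φ '' ↑(insert m (univ.biUnion S)))) =
        finrank K (span K (φ '' ↑(univ.biUnion S))) := by
  have hFli : ∀ i, LinearIndepOn K φ ↑(F i) := hF.2.2.2.1
  have hmT : m ∉ univ.biUnion S := by
    simp only [mem_biUnion, mem_univ, true_and, not_exists]
    exact fun i hi => disjoint_left.1 (hF.2.1 _ _ (ha i)) (hS i hi) hm
  have hT := card_biUnion_eq_mul_finrank_span
    (fun i j hij => (hF.2.1 _ _ (hι.ne hij)).mono (hS i) (hS j))
    (fun i => (hFli _).mono (coe_subset.2 (hS i))) hspan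
  refine ⟨by rw [card_insert_of_notMem hmT, hT], ?_⟩
  rw [coe_insert, Set.image_insert_eq, span_insert_eq_span hmS]

lemma IsFundamentalOn.exists_mul_finrank_lt_card (hF : IsFundamentalOn K φ univ F)
    (hk : k < ℓ) :
    ∃ J : Finset (Fin M), k * finrank K (span K (φ '' ↑J)) < J.card := by
  obtain ⟨n, rfl⟩ : ∃ n, ℓ = n + 1 := ⟨ℓ - 1, by omega⟩
  obtain ⟨m, hm⟩ := hF.1.1 (Fin.last n)
  rcases Nat.eq_zero_or_pos k with rfl | hk0
  · exact ⟨{m}, by simp⟩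
  obtain ⟨Z, hmZ, hZ⟩ := hF.exists_span_inter_eq hm
  have hlast := Fin.castLE_ne_of_le hk.le (a := Fin.last n) (Nat.lt_succ_iff.1 hk)
  have hspan : ∀ i : Fin k,
      span K (φ '' ↑(F (Fin.castLE hk.le i) ∩ Z)) = span K (φ '' ↑Z) := fun i => hZ _ (hlast i)
  have hmS : φ m ∈ span K (φ '' ↑(univ.biUnion fun i => F (Fin.castLE hk.le i) ∩ Z)) :=
    span_mono (Set.image_mono (coe_subset.2 (subset_biUnion_of_mem _ (mem_univ ⟨0, hk0⟩))))
      (hspan ⟨0, hk0⟩ ▸ subset_span ⟨m, hmZ, rfl⟩)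
  obtain ⟨hcard, hrank⟩ := card_insert_transversal hF.1 (Fin.castLE_injective hk.le) hlast hm
    (fun _ => inter_subset_left) (fun i j => (hspan i).trans (hspan j).symm) hmS
  rw [Fintype.card_fin] at hcard
  exact ⟨_, by rw [hrank, hcard]; omega⟩

end Transversal

/-- Failure of the Rado–Horn inequality in the redundant case.  If `Φ` has a
fundamental partition `{F_1,…,F_ℓ}` with `k < ℓ`, then there exists
`J ⊆ {1,…,M}` with `|J| > k · dim span(φ_j : j ∈ J)`.  Explicitly, for any
index `m ∈ F_ℓ` and any `k`-transversal `T = S_1 ∪ … ∪ S_k` of `{F_1,…,F_k}`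
with `φ_m ∈ span(T)`, the set `J = T ∪ {m}` satisfies
`|J| = k · dim span(T) + 1` and `dim span(J) = dim span(T)`, hence
`|J| > k · dim span(J)` (i.e. `|J|/dim span(J) = k + 1/dim span(T) > k`). -/
theorem rado_horn_inequality_fails {K V : Type*} [Field K] [AddCommGroup V] [Module K V]
    {M ℓ : ℕ} (k : ℕ) (φ : Fin M → V) (F : Fin ℓ → Finset (Fin M))
    (hF : IsFundamentalOn K φ Finset.univ F) (hk : k < ℓ) :
    (∃ J : Finset (Fin M),
      k * Module.finrank K (Submodule.span K (φ '' ↑J)) < J.card) ∧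
    ∀ m ∈ F ⟨ℓ - 1, by omega⟩, ∀ S : Fin k → Finset (Fin M),
      (∀ i, S i ⊆ F (Fin.castLE hk.le i)) →
      (∀ i j, Submodule.span K (φ '' ↑(S i)) = Submodule.span K (φ '' ↑(S j))) →
      φ m ∈ Submodule.span K (φ '' ↑(Finset.univ.biUnion S)) →
      (insert m (Finset.univ.biUnion S)).card =
          k * Module.finrank K (Submodule.span K (φ '' ↑(Finset.univ.biUnion S))) + 1 ∧
      Module.finrank K (Submodule.span K (φ '' ↑(insert m (Finset.univ.biUnion S)))) =
          Module.finrank K (Submodule.span K (φ '' ↑(Finset.univ.biUnion S))) ∧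
      k * Module.finrank K
          (Submodule.span K (φ '' ↑(insert m (Finset.univ.biUnion S)))) <
        (insert m (Finset.univ.biUnion S)).card := by
  refine ⟨hF.exists_mul_finrank_lt_card hk, fun m hm S hS hspan hmS => ?_⟩
  obtain ⟨hcard, hrank⟩ := card_insert_transversal hF.1 (Fin.castLE_injective hk.le)
    (Fin.castLE_ne_of_le hk.le (Nat.le_sub_one_of_lt hk)) hm hS hspan hmS
  rw [Fintype.card_fin] at hcard
  exact ⟨hcard, hrank, by rw [hrank, hcard]; omega⟩
end
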